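/- arXiv:1901.10180 — 2 statements merged into one kernel-verified Lean document; each statement's English description precedes it below -/
import Mathlib

section
/- Let G be a connected graph on n vertices that is not transmission regular. Then T_max(G) − μ_α(G) > (1−α)·n·T_max(G)·(n·T_max(G) − 2σ(G)) / ((1−α)·n²·T_max(G) + 4σ(G)·(n·T_max(G) − 2σ(G))). -/
set_option linter.unusedSectionVars false
set_option linter.unusedVariables false
set_option maxHeartbeats 1000000

open Finset Matrix

namespace DistAlpha

variable {V : Type*} [Fintype V] [DecidableEq V]

/-- The distance matrix of a graph, with real entries. -/
noncomputable def distMatrix (G : SimpleGraph V) : Matrix V V ℝ :=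
  fun u v => (G.dist u v : ℝ)

/-- The transmission of a vertex: the sum of distances to all vertices. -/
noncomputable def transmission (G : SimpleGraph V) (u : V) : ℝ :=
  ∑ v, (G.dist u v : ℝ)

/-- The matrix `D_α = α T + (1-α) D`. -/
noncomputable def Dalpha (G : SimpleGraph V) (α : ℝ) : Matrix V V ℝ :=
  α • Matrix.diagonal (transmission G) + (1 - α) • distMatrix G

/-- The distance α-spectral radius: the largest (real) eigenvalue of `D_α`. -/
noncomputable def muAlpha (G : SimpleGraph V) (α : ℝ) : ℝ :=
  sSup (spectrum ℝ (Dalpha G α))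

/-- The transmission of a graph: sum of distances over unordered pairs. -/
noncomputable def sigma (G : SimpleGraph V) : ℝ :=
  (∑ u, ∑ v, (G.dist u v : ℝ)) / 2

/-- A graph is transmission regular if all vertex transmissions are equal. -/
def TransmissionRegular (G : SimpleGraph V) : Prop :=
  ∀ u v : V, transmission G u = transmission G v

section Aux

variable (G : SimpleGraph V) (α : ℝ)

lemma transmission_nonneg (u : V) : 0 ≤ transmission G u :=
  Finset.sum_nonneg fun v _ => Nat.cast_nonneg _

lemma sum_transmission : ∑ v, transmission G v = 2 * sigma G := by
  simp only [transmission, sigma]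
  ring

lemma sigma_nonneg : 0 ≤ sigma G := by
  have : 0 ≤ ∑ u : V, ∑ v : V, (G.dist u v : ℝ) :=
    Finset.sum_nonneg fun u _ => Finset.sum_nonneg fun v _ => Nat.cast_nonneg _
  simp only [sigma]
  linarith

lemma dalpha_apply (u v : V) :
    Dalpha G α u v
      = α * Matrix.diagonal (transmission G) u v + (1 - α) * (G.dist u v : ℝ) := by
  simp [Dalpha, Matrix.add_apply, Matrix.smul_apply, smul_eq_mul, distMatrix]

lemma dalpha_apply_self (u : V) : Dalpha G α u u = α * transmission G u := by
  rw [dalpha_apply]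
  simp [Matrix.diagonal_apply_eq, SimpleGraph.dist_self]

lemma dalpha_apply_ne {u v : V} (h : u ≠ v) :
    Dalpha G α u v = (1 - α) * (G.dist u v : ℝ) := by
  rw [dalpha_apply]
  simp [Matrix.diagonal_apply_ne _ h]

lemma dalpha_nonneg (hα0 : 0 ≤ α) (hα1 : α ≤ 1) (u v : V) : 0 ≤ Dalpha G α u v := by
  rcases eq_or_ne u v with rfl | h
  · rw [dalpha_apply_self]
    exact mul_nonneg hα0 (transmission_nonneg G u)
  · rw [dalpha_apply_ne G α h]
    exact mul_nonneg (by linarith) (Nat.cast_nonneg _)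

lemma dalpha_symm (u v : V) : Dalpha G α u v = Dalpha G α v u := by
  rcases eq_or_ne u v with rfl | h
  · rfl
  · rw [dalpha_apply_ne G α h, dalpha_apply_ne G α h.symm, SimpleGraph.dist_comm]

lemma dalpha_isHermitian : (Dalpha G α).IsHermitian := by
  unfold Matrix.IsHermitian
  ext u v
  simp only [Matrix.conjTranspose_apply, star_trivial]
  exact dalpha_symm G α v u

lemma dalpha_rowsum (u : V) : ∑ v, Dalpha G α u v = transmission G u := by
  have h1 : ∑ v, Dalpha G α u v
      = ∑ v, (α * Matrix.diagonal (transmission G) u v + (1 - α) * (G.dist u v : ℝ)) := by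
    exact Finset.sum_congr rfl fun v _ => dalpha_apply G α u v
  rw [h1, Finset.sum_add_distrib, ← Finset.mul_sum, ← Finset.mul_sum]
  have h2 : ∑ v, Matrix.diagonal (transmission G) u v = transmission G u := by
    rw [Finset.sum_eq_single u]
    · simp
    · intro v _ hv
      exact Matrix.diagonal_apply_ne _ (Ne.symm hv)
    · intro h; exact absurd (Finset.mem_univ u) h
  rw [h2]
  have h3 : ∑ v, (G.dist u v : ℝ) = transmission G u := rfl
  rw [h3]
  ring

lemma exists_eigenvec [Nonempty V] :
    ∃ x : V → ℝ, x ≠ 0 ∧ Dalpha G α *ᵥ x = muAlpha G α • x := by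
  have hA : (Dalpha G α).IsHermitian := dalpha_isHermitian G α
  have hne : (spectrum ℝ (Dalpha G α)).Nonempty :=
    ⟨hA.eigenvalues (Classical.arbitrary V), hA.eigenvalues_mem_spectrum_real _⟩
  have hmem : muAlpha G α ∈ spectrum ℝ (Dalpha G α) :=
    hne.csSup_mem (Matrix.finite_spectrum _)
  rw [spectrum.mem_iff] at hmem
  have hdet : (algebraMap ℝ (Matrix V V ℝ) (muAlpha G α) - Dalpha G α).det = 0 := by
    by_contra h
    exact hmem ((Matrix.isUnit_iff_isUnit_det _).mpr (isUnit_iff_ne_zero.mpr h))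
  obtain ⟨x, hx0, hx⟩ := (Matrix.exists_mulVec_eq_zero_iff).mpr hdet
  refine ⟨x, hx0, ?_⟩
  have h1 : (algebraMap ℝ (Matrix V V ℝ) (muAlpha G α)) *ᵥ x - Dalpha G α *ᵥ x = 0 := by
    rw [← Matrix.sub_mulVec]; exact hx
  have h2 : (algebraMap ℝ (Matrix V V ℝ) (muAlpha G α)) *ᵥ x = muAlpha G α • x := by
    rw [Algebra.algebraMap_eq_smul_one, Matrix.smul_mulVec, Matrix.one_mulVec]
  rw [h2] at h1
  exact (sub_eq_zero.mp h1).symm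

end Aux

/-- for a connected graph that is not transmission regular,
`T_max(G) - μ_α(G) > (1-α) n T_max (n T_max - 2σ) / ((1-α) n² T_max + 4σ (n T_max - 2σ))`. -/
theorem Tmax_sub_muAlpha_gt (G : SimpleGraph V) (hG : G.Connected)
    (α : ℝ) (hα0 : 0 ≤ α) (hα1 : α < 1) (Tmax : ℝ)
    (hub : ∀ u, transmission G u ≤ Tmax) (hex : ∃ u, transmission G u = Tmax)
    (hnreg : ¬ TransmissionRegular G) :
    Tmax - muAlpha G α >
      (1 - α) * (Fintype.card V : ℝ) * Tmax * ((Fintype.card V : ℝ) * Tmax - 2 * sigma G) /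
        ((1 - α) * (Fintype.card V : ℝ) ^ 2 * Tmax +
          4 * sigma G * ((Fintype.card V : ℝ) * Tmax - 2 * sigma G)) := by
  classical
  haveI hnt : Nontrivial V := by
    by_contra h
    rw [not_nontrivial_iff_subsingleton] at h
    exact hnreg fun u v => by rw [Subsingleton.elim u v]
  have hcard2 : 2 ≤ Fintype.card V := Fintype.one_lt_card
  set n : ℝ := (Fintype.card V : ℝ) with hndef
  set β : ℝ := 1 - α with hβdef
  set σ : ℝ := sigma G with hσdef
  set μ : ℝ := muAlpha G α with hμdef
  have hβpos : 0 < β := by simp only [hβdef]; linarith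
  have hβle1 : β ≤ 1 := by simp only [hβdef]; linarith
  have hn2 : (2 : ℝ) ≤ n := by rw [hndef]; exact_mod_cast hcard2
  have hnpos : (0 : ℝ) < n := by linarith
  -- basic distance facts
  have hdist1 : ∀ {u v : V}, u ≠ v → (1 : ℝ) ≤ (G.dist u v : ℝ) := by
    intro u v h
    exact_mod_cast hG.pos_dist_of_ne h
  have hdistle : ∀ u v : V, (G.dist u v : ℝ) ≤ n - 1 := by
    intro u v
    have hlt : G.dist u v < Fintype.card V := by
      rcases eq_or_ne (G.dist u v) 0 with h | h
      · rw [h]; exact Fintype.card_pos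
      · obtain ⟨p, hp⟩ := SimpleGraph.exists_walk_of_dist_ne_zero h
        calc G.dist u v ≤ p.bypass.length := SimpleGraph.dist_le _
          _ < Fintype.card V := p.bypass_isPath.length_lt
    have : (G.dist u v : ℝ) + 1 ≤ n := by
      rw [hndef]; exact_mod_cast hlt
    linarith
  -- transmissions
  have htr_ge : ∀ u : V, n - 1 ≤ transmission G u := by
    intro u
    have h0 : transmission G u = ∑ v ∈ univ \ {u}, (G.dist u v : ℝ) := by
      rw [show transmission G u = ∑ v, (G.dist u v : ℝ) from rfl,
        ← Finset.sum_subset (Finset.subset_univ (univ \ {u}))]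
      intro v _ hv
      have : v = u := by
        simp only [Finset.mem_sdiff, Finset.mem_univ, true_and, Finset.mem_singleton,
          not_not] at hv
        exact hv
      simp [this]
    have h1 : ∑ v ∈ univ \ {u}, (1 : ℝ) ≤ ∑ v ∈ univ \ {u}, (G.dist u v : ℝ) := by
      apply Finset.sum_le_sum
      intro v hv
      have hvne : v ≠ u := by
        simp only [Finset.mem_sdiff, Finset.mem_univ, true_and, Finset.mem_singleton] at hv
        exact hv
      exact hdist1 hvne.symm
    have h2 : ∑ v ∈ univ \ {u}, (1 : ℝ) = n - 1 := by
      rw [Finset.sum_const, nsmul_eq_mul, mul_one]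
      have hc : (univ \ {u}).card = Fintype.card V - 1 := by
        rw [Finset.card_sdiff_of_subset (Finset.subset_univ _), Finset.card_singleton, Finset.card_univ]
      rw [hc, hndef]
      have : (1 : ℕ) ≤ Fintype.card V := le_trans one_le_two hcard2
      push_cast [Nat.cast_sub this]
      ring
    rw [h0]; linarith
  have htrnn : ∀ u : V, 0 ≤ transmission G u := transmission_nonneg G
  have hT1 : (1 : ℝ) ≤ Tmax := by
    obtain ⟨w, hw⟩ := hex
    have := htr_ge w
    linarith [hub w]
  have hTpos : (0 : ℝ) < Tmax := by linarith
  have hσsum : ∑ v, transmission G v = 2 * σ := by rw [hσdef]; exact sum_transmission G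
  have hσnn : 0 ≤ σ := by rw [hσdef]; exact sigma_nonneg G
  set s : ℝ := n * Tmax - 2 * σ with hsdef
  have hs_sum : ∑ v, (Tmax - transmission G v) = s := by
    rw [Finset.sum_sub_distrib, Finset.sum_const, nsmul_eq_mul, hσsum, hsdef, hndef,
      Finset.card_univ]
  have ha_nonneg : ∀ v, 0 ≤ Tmax - transmission G v := fun v => by linarith [hub v]
  have ha_le_s : ∀ v, Tmax - transmission G v ≤ s := by
    intro v
    rw [← hs_sum]
    exact Finset.single_le_sum (fun w _ => ha_nonneg w) (Finset.mem_univ v)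
  have hspos : 0 < s := by
    have hexne : ∃ v, transmission G v ≠ Tmax := by
      by_contra hall
      push_neg at hall
      exact hnreg fun u v => by rw [hall u, hall v]
    obtain ⟨v₀, hv₀⟩ := hexne
    have h1 : 0 < Tmax - transmission G v₀ := by
      rcases lt_or_eq_of_le (hub v₀) with h | h
      · linarith
      · exact absurd h hv₀
    calc (0:ℝ) < Tmax - transmission G v₀ := h1
      _ ≤ s := ha_le_s v₀
  -- matrix entry facts
  have hAnn : ∀ u v : V, 0 ≤ Dalpha G α u v := dalpha_nonneg G α hα0 (le_of_lt hα1)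
  have hrowsum : ∀ u : V, ∑ v, Dalpha G α u v = transmission G u := dalpha_rowsum G α
  -- eigenvector
  obtain ⟨x, hx0, heig⟩ := exists_eigenvec G α
  have hmulvec : ∀ (y : V → ℝ) (v : V), (Dalpha G α *ᵥ y) v = ∑ w, Dalpha G α v w * y w := by
    intro y v
    simp [Matrix.mulVec, dotProduct]
  -- row inequality with absolute values
  have hk : ∀ v, |μ| * |x v| ≤ ∑ w, Dalpha G α v w * |x w| := by
    intro v
    have h1 : (Dalpha G α *ᵥ x) v = μ * x v := by
      rw [heig]; simp [Pi.smul_apply, smul_eq_mul, hμdef]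
    calc |μ| * |x v| = |μ * x v| := (abs_mul μ (x v)).symm
      _ = |∑ w, Dalpha G α v w * x w| := by rw [← hmulvec x v, h1]
      _ ≤ ∑ w, |Dalpha G α v w * x w| := Finset.abs_sum_le_sum_abs _ _
      _ = ∑ w, Dalpha G α v w * |x w| := by
          refine Finset.sum_congr rfl fun w _ => ?_
          rw [abs_mul, abs_of_nonneg (hAnn v w)]
  -- |mu| <= Tmax
  obtain ⟨q, -, hqmax⟩ := Finset.exists_max_image Finset.univ (fun v => |x v|) univ_nonempty
  have hq' : ∀ v, |x v| ≤ |x q| := fun v => hqmax v (Finset.mem_univ v)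
  have hxq : 0 < |x q| := by
    obtain ⟨w, hw⟩ := Function.ne_iff.mp hx0
    exact lt_of_lt_of_le (abs_pos.mpr hw) (hq' w)
  have habs : |μ| ≤ Tmax := by
    have h1 : |μ| * |x q| ≤ Tmax * |x q| := by
      calc |μ| * |x q| ≤ ∑ w, Dalpha G α q w * |x w| := hk q
        _ ≤ ∑ w, Dalpha G α q w * |x q| := by
            refine Finset.sum_le_sum fun w _ => ?_
            exact mul_le_mul_of_nonneg_left (hq' w) (hAnn q w)
        _ = (∑ w, Dalpha G α q w) * |x q| := by rw [Finset.sum_mul]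
        _ = transmission G q * |x q| := by rw [hrowsum]
        _ ≤ Tmax * |x q| := mul_le_mul_of_nonneg_right (hub q) (abs_nonneg _)
    exact le_of_mul_le_mul_right h1 hxq
  have hμleT : μ ≤ Tmax := le_trans (le_abs_self μ) habs
  -- Case A quantity: second-order row sums
  have herase : ∀ (g : V → ℝ) (u : V), ∑ w ∈ univ.erase u, g w = (∑ w, g w) - g u := by
    intro g u
    have := Finset.sum_erase_add univ g (Finset.mem_univ u)
    linarith
  have hA2row : ∀ u : V, ∑ w, Dalpha G α u w * transmission G w ≤ Tmax ^ 2 - β * s := by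
    intro u
    have e1 : ∑ w, Dalpha G α u w * (Tmax - transmission G w)
        = Tmax * transmission G u - ∑ w, Dalpha G α u w * transmission G w := by
      have h1 : ∑ w, Dalpha G α u w * (Tmax - transmission G w)
          = Tmax * ∑ w, Dalpha G α u w - ∑ w, Dalpha G α u w * transmission G w := by
        rw [Finset.mul_sum, ← Finset.sum_sub_distrib]
        exact Finset.sum_congr rfl fun w _ => by ring
      rw [h1, hrowsum]
    have e2 : β * (s - (Tmax - transmission G u))
        ≤ ∑ w, Dalpha G α u w * (Tmax - transmission G w) := by
      have h1 : ∑ w ∈ univ.erase u, β * (Tmax - transmission G w)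
          ≤ ∑ w ∈ univ.erase u, Dalpha G α u w * (Tmax - transmission G w) := by
        apply Finset.sum_le_sum
        intro w hw
        have hwne : w ≠ u := Finset.ne_of_mem_erase hw
        rw [dalpha_apply_ne G α (Ne.symm hwne)]
        apply mul_le_mul_of_nonneg_right ?_ (ha_nonneg w)
        have hd := hdist1 (Ne.symm hwne)
        rw [← hβdef]
        nlinarith
      have h2 : ∑ w ∈ univ.erase u, β * (Tmax - transmission G w)
          = β * (s - (Tmax - transmission G u)) := by
        rw [herase (fun w => β * (Tmax - transmission G w)) u, ← Finset.mul_sum, hs_sum]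
        ring
      have h3 : ∑ w ∈ univ.erase u, Dalpha G α u w * (Tmax - transmission G w)
          ≤ ∑ w, Dalpha G α u w * (Tmax - transmission G w) := by
        apply Finset.sum_le_sum_of_subset_of_nonneg (Finset.subset_univ _)
        intro w _ _
        exact mul_nonneg (hAnn u w) (ha_nonneg w)
      linarith
    have ha := ha_nonneg u
    have hub' := hub u
    nlinarith [mul_nonneg ha (by linarith : (0:ℝ) ≤ Tmax - β)]
  have hcaseA : μ ^ 2 ≤ Tmax ^ 2 - β * s := by
    have h1 : μ ^ 2 * |x q| ≤ (Tmax ^ 2 - β * s) * |x q| := by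
      calc μ ^ 2 * |x q| = |μ| * (|μ| * |x q|) := by rw [← mul_assoc, abs_mul_abs_self, pow_two]
        _ ≤ |μ| * ∑ w, Dalpha G α q w * |x w| :=
            mul_le_mul_of_nonneg_left (hk q) (abs_nonneg μ)
        _ = ∑ w, Dalpha G α q w * (|μ| * |x w|) := by
            rw [Finset.mul_sum]; exact Finset.sum_congr rfl fun w _ => by ring
        _ ≤ ∑ w, Dalpha G α q w * (∑ u, Dalpha G α w u * |x u|) := by
            refine Finset.sum_le_sum fun w _ => ?_
            exact mul_le_mul_of_nonneg_left (hk w) (hAnn q w)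
        _ ≤ ∑ w, Dalpha G α q w * (transmission G w * |x q|) := by
            refine Finset.sum_le_sum fun w _ => ?_
            refine mul_le_mul_of_nonneg_left ?_ (hAnn q w)
            calc ∑ u, Dalpha G α w u * |x u| ≤ ∑ u, Dalpha G α w u * |x q| :=
                  Finset.sum_le_sum fun u _ => mul_le_mul_of_nonneg_left (hq' u) (hAnn w u)
              _ = transmission G w * |x q| := by rw [← Finset.sum_mul, hrowsum]
        _ = (∑ w, Dalpha G α q w * transmission G w) * |x q| := by
            rw [Finset.sum_mul]; exact Finset.sum_congr rfl fun w _ => by ring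
        _ ≤ (Tmax ^ 2 - β * s) * |x q| :=
            mul_le_mul_of_nonneg_right (hA2row q) (abs_nonneg _)
    exact le_of_mul_le_mul_right h1 hxq
  -- Case B master inequality
  have hcaseB : β * s ≤ (Tmax - μ) * (s + β * n) := by
    -- sign-normalized eigenvector
    obtain ⟨y, heig', p, hple, hppos⟩ :
        ∃ y : V → ℝ, Dalpha G α *ᵥ y = μ • y ∧ ∃ p : V, (∀ v, y v ≤ y p) ∧ 0 < y p := by
      obtain ⟨p, -, hp⟩ := Finset.exists_max_image Finset.univ x univ_nonempty
      rcases lt_or_ge 0 (x p) with h | h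
      · exact ⟨x, heig, p, fun v => hp v (Finset.mem_univ v), h⟩
      · obtain ⟨r, -, hr⟩ := Finset.exists_max_image Finset.univ (-x) univ_nonempty
        refine ⟨-x, ?_, r, fun v => hr v (Finset.mem_univ v), ?_⟩
        · rw [Matrix.mulVec_neg, heig, smul_neg]
        · obtain ⟨w, hw⟩ := Function.ne_iff.mp hx0
          have hxw : x w < 0 := lt_of_le_of_ne (le_trans (hp w (Finset.mem_univ w)) h) hw
          have h1 : (0:ℝ) < -x w := by linarith
          calc (0:ℝ) < -x w := h1
            _ ≤ -x r := hr w (Finset.mem_univ w)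
    set M : ℝ := y p with hMdef
    set t : ℝ := ∑ v, y v with htdef
    -- column-sum identity
    have hcol : ∑ v, transmission G v * y v = μ * t := by
      have h1 : ∑ u, (Dalpha G α *ᵥ y) u = μ * t := by
        rw [heig']
        simp only [Pi.smul_apply, smul_eq_mul]
        rw [htdef, ← Finset.mul_sum]
      have h2 : ∑ u, (Dalpha G α *ᵥ y) u = ∑ v, transmission G v * y v := by
        calc ∑ u, (Dalpha G α *ᵥ y) u = ∑ u, ∑ v, Dalpha G α u v * y v :=
              Finset.sum_congr rfl fun u _ => hmulvec y u
          _ = ∑ v, ∑ u, Dalpha G α u v * y v := Finset.sum_comm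
          _ = ∑ v, transmission G v * y v := by
              refine Finset.sum_congr rfl fun v _ => ?_
              rw [← Finset.sum_mul]
              congr 1
              calc ∑ u, Dalpha G α u v = ∑ u, Dalpha G α v u :=
                    Finset.sum_congr rfl fun u _ => dalpha_symm G α u v
                _ = transmission G v := hrowsum v
      rw [← h2, h1]
    have hax : ∑ v, (Tmax - transmission G v) * y v = (Tmax - μ) * t := by
      have h1 : ∑ v, (Tmax - transmission G v) * y v
          = Tmax * t - ∑ v, transmission G v * y v := by
        rw [htdef, Finset.mul_sum, ← Finset.sum_sub_distrib]
        exact Finset.sum_congr rfl fun v _ => by ring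
      rw [h1, hcol]
      ring
    -- row p identity
    have hrowp : ∑ v, Dalpha G α p v * (M - y v) = (transmission G p - μ) * M := by
      have h1 : (Dalpha G α *ᵥ y) p = μ * M := by
        rw [heig']
        simp only [Pi.smul_apply, smul_eq_mul, hMdef]
      have h2 : ∑ v, Dalpha G α p v * y v = μ * M := by rw [← hmulvec y p]; exact h1
      calc ∑ v, Dalpha G α p v * (M - y v)
          = (∑ v, Dalpha G α p v) * M - ∑ v, Dalpha G α p v * y v := by
            rw [Finset.sum_mul, ← Finset.sum_sub_distrib]
            exact Finset.sum_congr rfl fun v _ => by ring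
        _ = transmission G p * M - μ * M := by rw [hrowsum, h2]
        _ = (transmission G p - μ) * M := by ring
    have hMx : ∀ v, 0 ≤ M - y v := fun v => sub_nonneg.mpr (hple v)
    have hI3 : β * ∑ v, (M - y v) ≤ ∑ v, Dalpha G α p v * (M - y v) := by
      rw [Finset.mul_sum]
      apply Finset.sum_le_sum
      intro v _
      rcases eq_or_ne v p with rfl | hv
      · simp [hMdef]
      · rw [dalpha_apply_ne G α (Ne.symm hv)]
        apply mul_le_mul_of_nonneg_right ?_ (hMx v)
        have hd := hdist1 (Ne.symm hv)
        rw [← hβdef]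
        nlinarith
    have hεnn : 0 ≤ Tmax - μ := by linarith
    have hI5 : ∑ v, Dalpha G α p v * (M - y v) ≤ (Tmax - μ) * M := by
      rw [hrowp]
      apply mul_le_mul_of_nonneg_right ?_ (le_of_lt hppos)
      linarith [hub p]
    have hdip : β * ∑ v, (M - y v) ≤ (Tmax - μ) * M := le_trans hI3 hI5
    -- main expansion
    have hI6 : M * (s - n * (Tmax - μ))
        = ∑ v, ((Tmax - transmission G v) - (Tmax - μ)) * (M - y v) := by
      have expand : ∑ v, ((Tmax - transmission G v) - (Tmax - μ)) * (M - y v)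
          = s * M - n * ((Tmax - μ) * M)
            - ∑ v, (Tmax - transmission G v) * y v + (Tmax - μ) * t := by
        calc ∑ v, ((Tmax - transmission G v) - (Tmax - μ)) * (M - y v)
            = ∑ v, ((Tmax - transmission G v) * M - (Tmax - μ) * M
                - ((Tmax - transmission G v) * y v - (Tmax - μ) * y v)) :=
              Finset.sum_congr rfl fun v _ => by ring
          _ = ∑ v, ((Tmax - transmission G v) * M - (Tmax - μ) * M)
                - ∑ v, ((Tmax - transmission G v) * y v - (Tmax - μ) * y v) := by
              rw [Finset.sum_sub_distrib]
          _ = (∑ v, (Tmax - transmission G v) * M - ∑ v, (Tmax - μ) * M)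
                - (∑ v, (Tmax - transmission G v) * y v - ∑ v, (Tmax - μ) * y v) := by
              rw [Finset.sum_sub_distrib, Finset.sum_sub_distrib]
          _ = s * M - n * ((Tmax - μ) * M)
                - ∑ v, (Tmax - transmission G v) * y v + (Tmax - μ) * t := by
              rw [← Finset.sum_mul, hs_sum, Finset.sum_const, nsmul_eq_mul,
                Finset.card_univ, ← hndef, ← Finset.mul_sum, ← htdef]
              ring
      rw [expand, hax]
      ring
    have hI7 : ∑ v, ((Tmax - transmission G v) - (Tmax - μ)) * (M - y v)
        ≤ s * ∑ v, (M - y v) := by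
      rw [Finset.mul_sum]
      apply Finset.sum_le_sum
      intro v _
      apply mul_le_mul_of_nonneg_right ?_ (hMx v)
      linarith [ha_le_s v]
    have hfin : β * (M * (s - n * (Tmax - μ))) ≤ s * ((Tmax - μ) * M) := by
      calc β * (M * (s - n * (Tmax - μ)))
          = β * ∑ v, ((Tmax - transmission G v) - (Tmax - μ)) * (M - y v) := by rw [← hI6]
        _ ≤ β * (s * ∑ v, (M - y v)) := mul_le_mul_of_nonneg_left hI7 (le_of_lt hβpos)
        _ = s * (β * ∑ v, (M - y v)) := by ring
        _ ≤ s * ((Tmax - μ) * M) := mul_le_mul_of_nonneg_left hdip (le_of_lt hspos)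
    have hdiv : β * (s - n * (Tmax - μ)) ≤ s * (Tmax - μ) := by
      have h' : β * (s - n * (Tmax - μ)) * M ≤ s * (Tmax - μ) * M := by
        calc β * (s - n * (Tmax - μ)) * M = β * (M * (s - n * (Tmax - μ))) := by ring
          _ ≤ s * ((Tmax - μ) * M) := hfin
          _ = s * (Tmax - μ) * M := by ring
      exact le_of_mul_le_mul_right h' hppos
    nlinarith [hdiv]
  -- denominator
  have hD : 0 < β * n ^ 2 * Tmax + 4 * σ * s := by
    have h1 : 0 < β * n ^ 2 * Tmax := by positivity
    have h2 : 0 ≤ 4 * σ * s := by positivity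
    linarith
  rw [gt_iff_lt, div_lt_iff₀ hD]
  rcases le_or_gt (4 * σ) (n * Tmax) with hcase | hcase
  · -- Case A
    have hs2 : n * Tmax ≤ 2 * s := by rw [hsdef]; linarith
    have e2 : 2 * σ * (n * Tmax) ≤ 4 * σ * s := by nlinarith
    -- 2σ ≥ Tmax + (n-1)^2
    have hcard_erase : ∀ u : V, ((univ.erase u).card : ℝ) = n - 1 := by
      intro u
      rw [Finset.card_erase_of_mem (Finset.mem_univ u), Finset.card_univ, hndef]
      have h1 : (1:ℕ) ≤ Fintype.card V := le_trans one_le_two hcard2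
      push_cast [Nat.cast_sub h1]
      ring
    obtain ⟨w, hw⟩ := hex
    have h2σT : Tmax + (n - 1) ^ 2 ≤ 2 * σ := by
      have h1 : ∑ v ∈ univ.erase w, transmission G v
          = (∑ v, transmission G v) - transmission G w := by
        have := Finset.sum_erase_add univ (transmission G) (Finset.mem_univ w)
        linarith
      have h2 : (univ.erase w).card • (n - 1) ≤ ∑ v ∈ univ.erase w, transmission G v :=
        Finset.card_nsmul_le_sum _ _ _ fun v _ => htr_ge v
      rw [nsmul_eq_mul, hcard_erase w] at h2
      rw [h1, hσsum, hw] at h2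
      nlinarith
    have hTle : Tmax ≤ (n - 1) ^ 2 := by
      rw [← hw]
      have h0 : transmission G w = ∑ v ∈ univ.erase w, (G.dist w v : ℝ) := by
        have := Finset.sum_erase_add univ (fun v => (G.dist w v : ℝ)) (Finset.mem_univ w)
        simp only [SimpleGraph.dist_self, Nat.cast_zero, add_zero] at this
        have hdef : transmission G w = ∑ v, (G.dist w v : ℝ) := rfl
        rw [hdef]
        linarith
      have h1 : ∑ v ∈ univ.erase w, (G.dist w v : ℝ) ≤ ∑ v ∈ univ.erase w, (n - 1) :=
        Finset.sum_le_sum fun v _ => hdistle w v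
      have h2 : ∑ v ∈ univ.erase w, (n - 1 : ℝ) = (n - 1) * (n - 1) := by
        rw [Finset.sum_const, nsmul_eq_mul, hcard_erase w]
      rw [h0]
      calc ∑ v ∈ univ.erase w, (G.dist w v : ℝ) ≤ (n-1) * (n-1) := by rw [← h2]; exact h1
        _ = (n - 1) ^ 2 := by ring
    have e3 : 2 * Tmax < β * n + 2 * σ := by nlinarith
    have hkeyA : 2 * (n * Tmax ^ 2) < β * n ^ 2 * Tmax + 4 * σ * s := by
      have h5 : (2 * Tmax) * (n * Tmax) < (β * n + 2 * σ) * (n * Tmax) := by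
        exact mul_lt_mul_of_pos_right e3 (by positivity)
      nlinarith
    -- eps >= beta*s/(2 Tmax)
    have hε2 : β * s ≤ 2 * Tmax * (Tmax - μ) := by
      have hc0 : 0 ≤ Tmax - β * s / (2 * Tmax) := by
        rw [sub_nonneg, div_le_iff₀ (by positivity : (0:ℝ) < 2 * Tmax)]
        nlinarith [ha_le_s, hσnn]
      have hmu_le : μ ≤ Tmax - β * s / (2 * Tmax) := by
        by_contra hcon
        push_neg at hcon
        have hsq : (Tmax - β * s / (2 * Tmax)) ^ 2 < μ ^ 2 := by nlinarith
        have hexp : (Tmax - β * s / (2 * Tmax)) ^ 2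
            = Tmax ^ 2 - β * s + (β * s / (2 * Tmax)) ^ 2 := by
          field_simp
          ring
        nlinarith [sq_nonneg (β * s / (2 * Tmax))]
      have h' : β * s / (2 * Tmax) ≤ Tmax - μ := by linarith
      calc β * s = β * s / (2 * Tmax) * (2 * Tmax) := by field_simp
        _ ≤ (Tmax - μ) * (2 * Tmax) := mul_le_mul_of_nonneg_right h' (by positivity)
        _ = 2 * Tmax * (Tmax - μ) := by ring
    have t1 : 2 * Tmax * (β * n * Tmax * s)
        < 2 * Tmax * ((Tmax - μ) * (β * n ^ 2 * Tmax + 4 * σ * s)) := by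
      have u1 : β * s * (2 * (n * Tmax ^ 2)) < β * s * (β * n ^ 2 * Tmax + 4 * σ * s) :=
        mul_lt_mul_of_pos_left hkeyA (by positivity)
      have u2 : β * s * (β * n ^ 2 * Tmax + 4 * σ * s)
          ≤ 2 * Tmax * (Tmax - μ) * (β * n ^ 2 * Tmax + 4 * σ * s) :=
        mul_le_mul_of_nonneg_right hε2 (le_of_lt hD)
      calc 2 * Tmax * (β * n * Tmax * s) = β * s * (2 * (n * Tmax ^ 2)) := by ring
        _ < β * s * (β * n ^ 2 * Tmax + 4 * σ * s) := u1
        _ ≤ 2 * Tmax * (Tmax - μ) * (β * n ^ 2 * Tmax + 4 * σ * s) := u2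
        _ = 2 * Tmax * ((Tmax - μ) * (β * n ^ 2 * Tmax + 4 * σ * s)) := by ring
    have := lt_of_mul_lt_mul_left t1 (by positivity : (0:ℝ) ≤ 2 * Tmax)
    exact this
  · -- Case B
    have hsβn : (0:ℝ) < s + β * n := by nlinarith
    have k1 : β * n * Tmax * s * (s + β * n) < β * s * (β * n ^ 2 * Tmax + 4 * σ * s) := by
      have hid : β * s * (β * n ^ 2 * Tmax + 4 * σ * s) - β * n * Tmax * s * (s + β * n)
          = β * s * s * (4 * σ - n * Tmax) := by ring
      have hpos : 0 < β * s * s * (4 * σ - n * Tmax) :=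
        mul_pos (mul_pos (mul_pos hβpos hspos) hspos)
          (by linarith : (0:ℝ) < 4 * σ - n * Tmax)
      linarith
    have k2 : β * s * (β * n ^ 2 * Tmax + 4 * σ * s)
        ≤ (Tmax - μ) * (s + β * n) * (β * n ^ 2 * Tmax + 4 * σ * s) :=
      mul_le_mul_of_nonneg_right hcaseB (le_of_lt hD)
    have k3 : β * n * Tmax * s * (s + β * n)
        < (Tmax - μ) * (β * n ^ 2 * Tmax + 4 * σ * s) * (s + β * n) := by
      calc β * n * Tmax * s * (s + β * n)
          < β * s * (β * n ^ 2 * Tmax + 4 * σ * s) := k1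
        _ ≤ (Tmax - μ) * (s + β * n) * (β * n ^ 2 * Tmax + 4 * σ * s) := k2
        _ = (Tmax - μ) * (β * n ^ 2 * Tmax + 4 * σ * s) * (s + β * n) := by ring
    exact lt_of_mul_lt_mul_right k3 (le_of_lt hsβn)

end DistAlpha
end

section
/- Among all trees on n ≥ 4 vertices, the star S_n is the unique tree minimizing the distance α-spectral radius: μ_α(G) ≥ μ_α(S_n) for every tree G on n vertices, with equality if and only if G ≅ S_n. -/
open Finset Matrix

namespace DistAlpha

variable {V : Type*} [Fintype V] [DecidableEq V]

/-- The star graph on `n` vertices: vertex `0` is adjacent to all other vertices. -/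
def starGraph (n : ℕ) : SimpleGraph (Fin n) :=
  SimpleGraph.fromRel (fun u _ => u.val = 0)

/-! ### Spectrum lemmas for real symmetric matrices -/

section SpectrumLemmas
set_option linter.unusedSectionVars false
variable {W : Type*} [Fintype W] [DecidableEq W]

lemma algebraMap_sub_mulVec (M : Matrix W W ℝ) (lam : ℝ) (x : W → ℝ) :
    (algebraMap ℝ (Matrix W W ℝ) lam - M) *ᵥ x = lam • x - M *ᵥ x := by
  rw [Matrix.sub_mulVec, Algebra.algebraMap_eq_smul_one, Matrix.smul_mulVec,
    Matrix.one_mulVec]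

lemma mem_spectrum_of_mulVec {M : Matrix W W ℝ} {lam : ℝ} {x : W → ℝ} (hx : x ≠ 0)
    (h : M *ᵥ x = lam • x) : lam ∈ spectrum ℝ M := by
  rw [spectrum.mem_iff, Matrix.isUnit_iff_isUnit_det, isUnit_iff_ne_zero, not_not,
    ← Matrix.exists_mulVec_eq_zero_iff]
  exact ⟨x, hx, by rw [algebraMap_sub_mulVec, h, sub_self]⟩

lemma exists_eigenvector_of_mem_spectrum {M : Matrix W W ℝ} {lam : ℝ}
    (h : lam ∈ spectrum ℝ M) : ∃ x, x ≠ 0 ∧ M *ᵥ x = lam • x := by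
  rw [spectrum.mem_iff, Matrix.isUnit_iff_isUnit_det, isUnit_iff_ne_zero, not_not,
    ← Matrix.exists_mulVec_eq_zero_iff] at h
  obtain ⟨x, hx, hx0⟩ := h
  rw [algebraMap_sub_mulVec, sub_eq_zero] at hx0
  exact ⟨x, hx, hx0.symm⟩

lemma qform_decomp [Nonempty W] {M : Matrix W W ℝ} (hM : M.IsHermitian) (x : W → ℝ) :
    ∃ c : W → ℝ, x ⬝ᵥ M *ᵥ x = ∑ i, hM.eigenvalues i * c i ^ 2 ∧ x ⬝ᵥ x = ∑ i, c i ^ 2 := by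
  set U : Matrix W W ℝ := (hM.eigenvectorUnitary : Matrix W W ℝ) with hU
  have hU1 : U * star U = 1 := (Matrix.mem_unitaryGroup_iff).mp hM.eigenvectorUnitary.2
  have hdiag : (RCLike.ofReal ∘ hM.eigenvalues : W → ℝ) = hM.eigenvalues := by
    funext i; simp
  refine ⟨star U *ᵥ x, ?_, ?_⟩
  · conv_lhs => rw [hM.spectral_theorem]
    rw [Unitary.conjStarAlgAut_apply, hdiag, ← Matrix.mulVec_mulVec, ← Matrix.mulVec_mulVec, Matrix.dotProduct_mulVec x U,
      ← Matrix.mulVec_transpose]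
    have hsU : Uᵀ = star U := by
      rw [Matrix.star_eq_conjTranspose, Matrix.conjTranspose]
      ext i j; simp
    rw [hsU]
    simp only [dotProduct, Matrix.mulVec_diagonal]
    exact Finset.sum_congr rfl fun i _ => by ring
  · conv_lhs => rw [show x ⬝ᵥ x = x ⬝ᵥ (1 : Matrix W W ℝ) *ᵥ x by rw [Matrix.one_mulVec],
      ← hU1, ← Matrix.mulVec_mulVec, Matrix.dotProduct_mulVec x U, ← Matrix.mulVec_transpose]
    have hsU : Uᵀ = star U := by
      rw [Matrix.star_eq_conjTranspose, Matrix.conjTranspose]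
      ext i j; simp
    rw [hsU]
    simp only [dotProduct]
    exact Finset.sum_congr rfl fun i _ => by ring

lemma dotProduct_self_pos {x : W → ℝ} (hx : x ≠ 0) : 0 < x ⬝ᵥ x := by
  have h0 : (0:ℝ) ≤ x ⬝ᵥ x := Finset.sum_nonneg fun i _ => mul_self_nonneg _
  rcases h0.lt_or_eq with h | h
  · exact h
  · exfalso
    apply hx
    funext i
    have := Finset.sum_eq_zero_iff_of_nonneg (fun j (_ : j ∈ (univ : Finset W)) =>
      mul_self_nonneg (x j)) |>.mp h.symm i (mem_univ i)
    exact mul_self_eq_zero.mp this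

lemma isGreatest_spectrum [Nonempty W] {M : Matrix W W ℝ} (hM : M.IsHermitian) :
    IsGreatest (spectrum ℝ M) (univ.sup' univ_nonempty hM.eigenvalues) := by
  constructor
  · obtain ⟨i, _, hi⟩ := Finset.exists_mem_eq_sup' univ_nonempty hM.eigenvalues
    rw [hi]
    exact hM.eigenvalues_mem_spectrum_real i
  · intro lam hlam
    obtain ⟨x, hx, hxe⟩ := exists_eigenvector_of_mem_spectrum hlam
    obtain ⟨c, hc1, hc2⟩ := qform_decomp hM x
    set m := univ.sup' univ_nonempty hM.eigenvalues with hm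
    have h1 : lam * (x ⬝ᵥ x) = x ⬝ᵥ M *ᵥ x := by
      rw [hxe, dotProduct_smul, smul_eq_mul]
    have h2 : x ⬝ᵥ M *ᵥ x ≤ m * (x ⬝ᵥ x) := by
      rw [hc1, hc2, Finset.mul_sum]
      refine Finset.sum_le_sum fun i _ => ?_
      exact mul_le_mul_of_nonneg_right (Finset.le_sup' _ (mem_univ i)) (sq_nonneg _)
    have hpos := dotProduct_self_pos hx
    nlinarith

lemma sSup_spectrum_eq [Nonempty W] {M : Matrix W W ℝ} (hM : M.IsHermitian) :
    sSup (spectrum ℝ M) = univ.sup' univ_nonempty hM.eigenvalues :=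
  (isGreatest_spectrum hM).csSup_eq

/-- Rayleigh-type lower bound for the top of the spectrum. -/
lemma qform_le_sSup [Nonempty W] {M : Matrix W W ℝ} (hM : M.IsHermitian) (x : W → ℝ) :
    x ⬝ᵥ M *ᵥ x ≤ sSup (spectrum ℝ M) * (x ⬝ᵥ x) := by
  rw [sSup_spectrum_eq hM]
  obtain ⟨c, hc1, hc2⟩ := qform_decomp hM x
  rw [hc1, hc2, Finset.mul_sum]
  exact Finset.sum_le_sum fun i _ =>
    mul_le_mul_of_nonneg_right (Finset.le_sup' _ (mem_univ i)) (sq_nonneg _)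

/-- If a quadratic-form upper bound holds and `mu` is an eigenvalue, then `sSup spectrum = mu`. -/
lemma sSup_spectrum_eq_of_eigen [Nonempty W] {M : Matrix W W ℝ} {mu : ℝ} {x : W → ℝ}
    (hx : x ≠ 0) (hxe : M *ᵥ x = mu • x)
    (hb : ∀ y : W → ℝ, y ⬝ᵥ M *ᵥ y ≤ mu * (y ⬝ᵥ y)) :
    sSup (spectrum ℝ M) = mu := by
  have hmem := mem_spectrum_of_mulVec hx hxe
  have hub : ∀ lam ∈ spectrum ℝ M, lam ≤ mu := by
    intro lam hlam
    obtain ⟨y, hy, hye⟩ := exists_eigenvector_of_mem_spectrum hlam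
    have h1 : lam * (y ⬝ᵥ y) = y ⬝ᵥ M *ᵥ y := by
      rw [hye, dotProduct_smul, smul_eq_mul]
    have := hb y
    have hpos := dotProduct_self_pos hy
    nlinarith
  exact IsGreatest.csSup_eq ⟨hmem, hub⟩

end SpectrumLemmas

/-! ### Tree lemmas -/

section TreeLemmas
set_option linter.unusedSectionVars false
variable {G : SimpleGraph V}

lemma exists_shortest (hc : G.Connected) (u v : V) :
    ∃ p : G.Walk u v, p.IsPath ∧ p.length = G.dist u v := by
  obtain ⟨q, hq⟩ := hc.exists_walk_length_eq_dist u v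
  exact ⟨q.bypass, q.bypass_isPath,
    le_antisymm (by calc q.bypass.length ≤ q.length := q.length_bypass_le
                      _ = G.dist u v := hq) (SimpleGraph.dist_le _)⟩

lemma dist_le_of_mem_support {w u z : V} (p : G.Walk w u) (hz : z ∈ p.support) :
    G.dist w z ≤ p.length :=
  le_trans (SimpleGraph.dist_le (p.takeUntil z hz)) (p.length_takeUntil_le hz)

lemma concat_isPath {u v z : V} {p : G.Walk u v} (hp : p.IsPath) (h : G.Adj v z)
    (hz : z ∉ p.support) : (p.concat h).IsPath := by
  rw [← SimpleGraph.Walk.isPath_reverse_iff, SimpleGraph.Walk.reverse_concat]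
  exact SimpleGraph.Walk.IsPath.cons hp.reverse
    (by simpa [SimpleGraph.Walk.support_reverse] using hz)

lemma adj_dichotomy (hT : G.IsTree) (w : V) {u z : V} (h : G.Adj u z) :
    G.dist w z = G.dist w u + 1 ∨ G.dist w u = G.dist w z + 1 := by
  obtain ⟨p, hp, hpl⟩ := exists_shortest hT.isConnected w u
  by_cases hz : z ∈ p.support
  · right
    have htd : G.dist w z ≤ (p.takeUntil z hz).length := SimpleGraph.dist_le _
    have hsplit : (p.takeUntil z hz).length + (p.dropUntil z hz).length = p.length := by
      have := congrArg SimpleGraph.Walk.length (p.take_spec hz)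
      rw [SimpleGraph.Walk.length_append] at this
      exact this
    have hdrop : (p.dropUntil z hz).length ≠ 0 := by
      intro h0
      exact h.ne' (SimpleGraph.Walk.eq_of_length_eq_zero h0)
    have htri : G.dist w u ≤ G.dist w z + G.dist z u := hT.isConnected.dist_triangle
    have hzu : G.dist z u = 1 := SimpleGraph.dist_eq_one_iff_adj.mpr h.symm
    omega
  · left
    have hq : (p.concat h).IsPath := concat_isPath hp h hz
    obtain ⟨s, hs, hsl⟩ := exists_shortest hT.isConnected w z
    have := (hT.existsUnique_path w z).unique hq hs
    have hlen : (p.concat h).length = G.dist w z := by rw [this, hsl]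
    rw [SimpleGraph.Walk.length_concat, hpl] at hlen
    omega

lemma parent_unique (hT : G.IsTree) {w z u₁ u₂ : V} (h1 : G.Adj u₁ z) (h2 : G.Adj u₂ z)
    (hd1 : G.dist w z = G.dist w u₁ + 1) (hd2 : G.dist w z = G.dist w u₂ + 1) : u₁ = u₂ := by
  obtain ⟨p₁, hp₁, hl₁⟩ := exists_shortest hT.isConnected w u₁
  obtain ⟨p₂, hp₂, hl₂⟩ := exists_shortest hT.isConnected w u₂
  have hz₁ : z ∉ p₁.support := fun hz => by
    have := dist_le_of_mem_support p₁ hz; omega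
  have hz₂ : z ∉ p₂.support := fun hz => by
    have := dist_le_of_mem_support p₂ hz; omega
  have hq₁ : (p₁.concat h1).IsPath := concat_isPath hp₁ h1 hz₁
  have hq₂ : (p₂.concat h2).IsPath := concat_isPath hp₂ h2 hz₂
  have heq := (hT.existsUnique_path w z).unique hq₁ hq₂
  have := congrArg (fun r => SimpleGraph.Walk.getVert r.reverse 1) heq
  simpa [SimpleGraph.Walk.reverse_concat, SimpleGraph.Walk.getVert_cons_succ,
    SimpleGraph.Walk.getVert_zero] using this

lemma far_neighbor (hT : G.IsTree) {w z : V} (hz : 2 ≤ G.dist w z) {a b : V}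
    (ha : G.Adj w a) (hb : G.Adj w b) (hab : a ≠ b) :
    3 ≤ G.dist z a ∨ 3 ≤ G.dist z b := by
  by_contra hcon
  push_neg at hcon
  obtain ⟨hda, hdb⟩ := hcon
  obtain ⟨p, hp, hl⟩ := exists_shortest hT.isConnected w z
  have hwz : w ≠ z := by intro h; rw [h, SimpleGraph.dist_self] at hz; omega
  have key : ∀ u', G.Adj w u' → G.dist z u' ≤ 2 → u' = p.getVert 1 := by
    intro u' hadj hd2
    have hwu : G.dist w u' = 1 := SimpleGraph.dist_eq_one_iff_adj.mpr hadj
    have hzu_ne : z ≠ u' := by intro h; rw [← h] at hwu; omega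
    have hd1 : 1 ≤ G.dist z u' :=
      hT.isConnected.pos_dist_of_ne hzu_ne
    interval_cases hzu : G.dist z u'
    · have hadj_zu : G.Adj z u' := SimpleGraph.dist_eq_one_iff_adj.mp hzu
      have hq : ((SimpleGraph.Walk.cons hadj (SimpleGraph.Walk.cons hadj_zu.symm
          SimpleGraph.Walk.nil)) : G.Walk w z).IsPath := by
        simp [SimpleGraph.Walk.cons_isPath_iff]
        exact ⟨hadj_zu.ne', hadj.ne, hwz⟩
      have heq := (hT.existsUnique_path w z).unique hq hp
      have := congrArg (fun r => SimpleGraph.Walk.getVert r 1) heq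
      simpa [SimpleGraph.Walk.getVert_cons_succ, SimpleGraph.Walk.getVert_zero] using this
    · obtain ⟨r, hr, hrl⟩ := exists_shortest hT.isConnected z u'
      set y := r.getVert 1 with hy
      have hzy : G.Adj z y := by
        have := r.adj_getVert_succ (by omega : 0 < r.length)
        simpa [SimpleGraph.Walk.getVert_zero] using this
      have hyu : G.Adj y u' := by
        have := r.adj_getVert_succ (by rw [hrl]; omega : 1 < r.length)
        have h2 : r.getVert 2 = u' := by
          have h3 := r.getVert_length
          rw [hrl, hzu] at h3
          exact h3
        rwa [h2] at this
      have hyw : y ≠ w := by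
        intro h
        have : G.Adj z w := h ▸ hzy
        have : G.dist w z = 1 := SimpleGraph.dist_eq_one_iff_adj.mpr this.symm
        omega
      have huy : u' ≠ y := by
        intro h
        have : G.Adj z u' := h ▸ hzy
        have : G.dist z u' = 1 := SimpleGraph.dist_eq_one_iff_adj.mpr this
        omega
      have hq : ((SimpleGraph.Walk.cons hadj (SimpleGraph.Walk.cons hyu.symm
          (SimpleGraph.Walk.cons hzy.symm SimpleGraph.Walk.nil))) : G.Walk w z).IsPath := by
        simp [SimpleGraph.Walk.cons_isPath_iff]
        exact ⟨⟨hzy.ne', huy, hzu_ne.symm⟩, hadj.ne, hyw.symm, hwz⟩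
      have heq := (hT.existsUnique_path w z).unique hq hp
      have := congrArg (fun r => SimpleGraph.Walk.getVert r 1) heq
      simpa [SimpleGraph.Walk.getVert_cons_succ, SimpleGraph.Walk.getVert_zero] using this
  have h1 := key a ha (by omega)
  have h2 := key b hb (by omega)
  exact hab (h1.trans h2.symm)

end TreeLemmas

/-! ### Quadratic form identities for `Dalpha` -/

section Identities
set_option linter.unusedSectionVars false

lemma Dalpha_isHermitian (G : SimpleGraph V) (α : ℝ) : (Dalpha G α).IsHermitian := by
  unfold Matrix.IsHermitian
  ext i j
  rw [Matrix.conjTranspose_apply, star_trivial]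
  simp only [Dalpha, Matrix.add_apply, Matrix.smul_apply, Matrix.diagonal_apply, distMatrix,
    smul_eq_mul]
  rw [SimpleGraph.dist_comm]
  by_cases h : i = j
  · subst h; simp
  · simp [h, Ne.symm h]

lemma Dalpha_mulVec (G : SimpleGraph V) (α : ℝ) (x : V → ℝ) (u : V) :
    (Dalpha G α *ᵥ x) u = α * (transmission G u * x u)
      + (1 - α) * ∑ v, (G.dist u v : ℝ) * x v := by
  have hd : (distMatrix G *ᵥ x) u = ∑ v, (G.dist u v : ℝ) * x v := rfl
  simp only [Dalpha, Matrix.add_mulVec, Matrix.smul_mulVec, Pi.add_apply, Pi.smul_apply,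
    Matrix.mulVec_diagonal, smul_eq_mul, hd, mul_assoc]

lemma qform_eval (G : SimpleGraph V) (α : ℝ) (x : V → ℝ) :
    x ⬝ᵥ (Dalpha G α *ᵥ x) = α * (∑ u, transmission G u * x u ^ 2)
      + (1 - α) * ∑ u, ∑ v, (G.dist u v : ℝ) * (x u * x v) := by
  simp only [dotProduct, Dalpha_mulVec, mul_add, Finset.mul_sum, ← Finset.sum_add_distrib]
  refine Finset.sum_congr rfl fun u _ => ?_
  refine congrArg₂ (· + ·) (by ring) (Finset.sum_congr rfl fun v _ => by ring)

lemma sum_split (f : V → ℝ) (w : V) : ∑ v, f v = f w + ∑ v ∈ univ.erase w, f v :=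
  (Finset.add_sum_erase _ f (mem_univ w)).symm

lemma qform_split (G : SimpleGraph V) (α : ℝ) (w : V) (a b : ℝ) :
    (fun v => if v = w then a else b) ⬝ᵥ (Dalpha G α *ᵥ (fun v => if v = w then a else b)) =
      (α * (a ^ 2 + b ^ 2) + 2 * (1 - α) * a * b) * (∑ v ∈ univ.erase w, (G.dist w v : ℝ))
      + b ^ 2 * (∑ u ∈ univ.erase w, ∑ v ∈ univ.erase w, (G.dist u v : ℝ)) := by
  set x : V → ℝ := fun v => if v = w then a else b with hx
  have hxw : x w = a := by simp [hx]
  have hxv : ∀ v ∈ univ.erase w, x v = b := by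
    intro v hv
    simp [hx, (Finset.mem_erase.mp hv).1]
  set A' : ℝ := ∑ v ∈ univ.erase w, (G.dist w v : ℝ) with hA
  set B2 : ℝ := ∑ u ∈ univ.erase w, ∑ v ∈ univ.erase w, (G.dist u v : ℝ) with hB
  have htw : transmission G w = A' := by
    rw [transmission, sum_split (fun v => (G.dist w v : ℝ)) w, SimpleGraph.dist_self,
      Nat.cast_zero, zero_add]
  have htu : ∀ u ∈ univ.erase w, transmission G u = (G.dist w u : ℝ) + ∑ v ∈ univ.erase w, (G.dist u v : ℝ) := by
    intro u hu
    rw [transmission, sum_split _ w, SimpleGraph.dist_comm]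
  rw [qform_eval]
  have hP1 : ∑ u, transmission G u * x u ^ 2
      = A' * a ^ 2 + b ^ 2 * (A' + B2) := by
    rw [sum_split _ w, htw, hxw]
    rw [Finset.sum_congr rfl (fun u hu => by rw [htu u hu, hxv u hu])]
    rw [Finset.sum_congr rfl (fun u (hu : u ∈ univ.erase w) => (add_mul _ _ _ : ((G.dist w u : ℝ) + ∑ v ∈ univ.erase w, (G.dist u v : ℝ)) * b ^ 2 = _))]
    rw [Finset.sum_add_distrib, ← Finset.sum_mul, ← Finset.sum_mul]
    ring
  have hP2 : ∑ u, ∑ v, (G.dist u v : ℝ) * (x u * x v)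
      = 2 * (a * b) * A' + b ^ 2 * B2 := by
    rw [sum_split _ w]
    have hrow_w : ∑ v, (G.dist w v : ℝ) * (x w * x v) = a * b * A' := by
      rw [sum_split _ w]
      simp only [SimpleGraph.dist_self, Nat.cast_zero, zero_mul, zero_add]
      rw [Finset.sum_congr rfl (fun v hv => by rw [hxw, hxv v hv])]
      rw [← Finset.sum_mul, ← hA]
      ring
    have hrow_u : ∀ u ∈ univ.erase w, ∑ v, (G.dist u v : ℝ) * (x u * x v)
        = b * a * (G.dist w u : ℝ) + b ^ 2 * ∑ v ∈ univ.erase w, (G.dist u v : ℝ) := by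
      intro u hu
      rw [sum_split _ w, hxw, hxv u hu, SimpleGraph.dist_comm]
      rw [Finset.sum_congr rfl (fun v hv => by rw [hxv v hv])]
      rw [Finset.sum_congr rfl (fun v (hv : v ∈ univ.erase w) =>
        (by ring : (G.dist u v : ℝ) * (b * b) = b ^ 2 * (G.dist u v : ℝ)))]
      rw [← Finset.mul_sum]
      ring
    rw [hrow_w, Finset.sum_congr rfl hrow_u, Finset.sum_add_distrib, ← Finset.mul_sum,
      ← Finset.mul_sum, ← hA, ← hB]
    ring
  rw [hP1, hP2]
  ring

lemma dot_self_split (w : V) (a b : ℝ) :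
    (fun v => if v = w then a else b) ⬝ᵥ (fun v => if v = w then a else b)
      = a ^ 2 + ((Fintype.card V : ℝ) - 1) * b ^ 2 := by
  rw [dotProduct, sum_split (fun v => (if v = w then a else b) * (if v = w then a else b)) w]
  rw [if_pos rfl]
  rw [Finset.sum_congr rfl (fun v hv => by rw [if_neg (Finset.mem_erase.mp hv).1])]
  rw [Finset.sum_const, Finset.card_erase_of_mem (mem_univ _), card_univ, nsmul_eq_mul]
  have h1 : 1 ≤ Fintype.card V := Fintype.card_pos_iff.mpr ⟨w⟩
  push_cast [Nat.cast_sub h1]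
  ring

end Identities

/-! ### The star graph -/

section Star
set_option linter.unusedSectionVars false
variable {n : ℕ} [NeZero n] {α : ℝ}

lemma star_adj (hn : 4 ≤ n) {u v : Fin n} :
    (starGraph n).Adj u v ↔ u ≠ v ∧ (u = 0 ∨ v = 0) := by
  have h0 : ∀ w : Fin n, w = 0 ↔ (w : ℕ) = 0 := fun w => by
    rw [Fin.ext_iff, Fin.val_zero]
  rw [starGraph, SimpleGraph.fromRel_adj]
  simp only [h0]

lemma star_dist (hn : 4 ≤ n) (u v : Fin n) :
    (starGraph n).dist u v = if u = v then 0 else if u = 0 ∨ v = 0 then 1 else 2 := by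
  by_cases heq : u = v
  · simp [heq]
  by_cases h0 : u = 0 ∨ v = 0
  · rw [if_neg heq, if_pos h0]
    exact SimpleGraph.dist_eq_one_iff_adj.mpr ((star_adj hn).mpr ⟨heq, h0⟩)
  push_neg at h0
  obtain ⟨hu0, hv0⟩ := h0
  rw [if_neg heq, if_neg (by push_neg; exact ⟨hu0, hv0⟩)]
  have hadj1 : (starGraph n).Adj u 0 := (star_adj hn).mpr ⟨hu0, Or.inr rfl⟩
  have hadj2 : (starGraph n).Adj 0 v := (star_adj hn).mpr ⟨Ne.symm hv0, Or.inl rfl⟩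
  have hle : (starGraph n).dist u v ≤ 2 := by
    have := SimpleGraph.dist_le ((SimpleGraph.Walk.cons hadj1 (SimpleGraph.Walk.cons hadj2
      SimpleGraph.Walk.nil)) : (starGraph n).Walk u v)
    simpa using this
  have hne1 : (starGraph n).dist u v ≠ 1 := fun h => by
    have := SimpleGraph.dist_eq_one_iff_adj.mp h
    rw [star_adj hn] at this
    tauto
  have hne0 : (starGraph n).dist u v ≠ 0 := by
    rw [Ne, SimpleGraph.dist_eq_zero_iff_eq_or_not_reachable]
    push_neg
    exact ⟨heq, ⟨SimpleGraph.Walk.cons hadj1 (SimpleGraph.Walk.cons hadj2 SimpleGraph.Walk.nil)⟩⟩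
  omega

lemma star_rowsum0 (hn : 4 ≤ n) (y : Fin n → ℝ) :
    ∑ v, ((starGraph n).dist 0 v : ℝ) * y v = ∑ v ∈ univ.erase 0, y v := by
  rw [sum_split (fun v => ((starGraph n).dist 0 v : ℝ) * y v) 0, SimpleGraph.dist_self]
  simp only [Nat.cast_zero, zero_mul, zero_add]
  refine Finset.sum_congr rfl fun v hv => ?_
  have hv0 : v ≠ 0 := (Finset.mem_erase.mp hv).1
  rw [star_dist hn, if_neg (Ne.symm hv0), if_pos (Or.inl rfl), Nat.cast_one, one_mul]

lemma star_rowsum1 (hn : 4 ≤ n) (y : Fin n → ℝ) {u : Fin n} (hu : u ≠ 0) :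
    ∑ v, ((starGraph n).dist u v : ℝ) * y v
      = y 0 + 2 * (∑ v ∈ univ.erase 0, y v) - 2 * y u := by
  rw [sum_split (fun v => ((starGraph n).dist u v : ℝ) * y v) 0]
  have h1 : ((starGraph n).dist u 0 : ℝ) = 1 := by
    rw [star_dist hn, if_neg hu, if_pos (Or.inr rfl), Nat.cast_one]
  rw [h1, one_mul]
  have h2 : ∀ v ∈ univ.erase 0, ((starGraph n).dist u v : ℝ) * y v
      = 2 * y v - (if v = u then 2 * y v else 0) := by
    intro v hv
    have hv0 : v ≠ 0 := (Finset.mem_erase.mp hv).1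
    by_cases hvu : v = u
    · subst hvu; rw [SimpleGraph.dist_self]; simp
    · rw [star_dist hn, if_neg (fun h => hvu h.symm),
        if_neg (by push_neg; exact ⟨hu, hv0⟩), if_neg hvu]
      norm_num
  rw [Finset.sum_congr rfl h2, Finset.sum_sub_distrib, Finset.sum_ite_eq' (univ.erase 0) u,
    if_pos (Finset.mem_erase.mpr ⟨hu, mem_univ u⟩), Finset.mul_sum]
  ring

lemma card_erase_fin (hn : 4 ≤ n) (u : Fin n) :
    (((univ : Finset (Fin n)).erase u).card : ℝ) = (n : ℝ) - 1 := by
  rw [Finset.card_erase_of_mem (mem_univ _), card_univ, Fintype.card_fin]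
  push_cast [Nat.cast_sub (by omega : 1 ≤ n)]
  ring

lemma star_transmission0 (hn : 4 ≤ n) :
    transmission (starGraph n) (0 : Fin n) = (n : ℝ) - 1 := by
  have h := star_rowsum0 hn (fun _ => (1:ℝ))
  rw [transmission]
  calc ∑ v, ((starGraph n).dist 0 v : ℝ) = ∑ v, ((starGraph n).dist 0 v : ℝ) * 1 := by simp
    _ = ∑ v ∈ univ.erase 0, (1:ℝ) := h
    _ = (n : ℝ) - 1 := by rw [Finset.sum_const, nsmul_eq_mul, mul_one, card_erase_fin hn]

lemma star_transmission1 (hn : 4 ≤ n) {u : Fin n} (hu : u ≠ 0) :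
    transmission (starGraph n) u = 2 * (n : ℝ) - 3 := by
  have h := star_rowsum1 hn (fun _ => (1:ℝ)) hu
  rw [transmission]
  calc ∑ v, ((starGraph n).dist u v : ℝ) = ∑ v, ((starGraph n).dist u v : ℝ) * 1 := by simp
    _ = 1 + 2 * (∑ v ∈ univ.erase 0, (1:ℝ)) - 2 * 1 := h
    _ = 2 * (n : ℝ) - 3 := by
        rw [Finset.sum_const, nsmul_eq_mul, mul_one, card_erase_fin hn]
        ring

/-- The largest `Dα`-eigenvalue of the star. -/
noncomputable def muS (n : ℕ) (α : ℝ) : ℝ :=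
  ((α * ((n:ℝ) - 1) + (α * (2*(n:ℝ)-3) + 2*(1-α)*((n:ℝ)-2)))
    + Real.sqrt (((α * (2*(n:ℝ)-3) + 2*(1-α)*((n:ℝ)-2)) - α * ((n:ℝ) - 1))^2
        + 4*((n:ℝ)-1)*(1-α)^2)) / 2

lemma muS_facts (hn : 4 ≤ n) (hα0 : 0 ≤ α) (hα1 : α < 1) :
    (muS n α - α * ((n:ℝ) - 1)) * (muS n α - (α * (2*(n:ℝ)-3) + 2*(1-α)*((n:ℝ)-2)))
        = ((n:ℝ) - 1) * (1 - α)^2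
      ∧ 0 < muS n α - α * ((n:ℝ) - 1)
      ∧ 0 < muS n α - (α * (2*(n:ℝ)-3) + 2*(1-α)*((n:ℝ)-2)) := by
  have hn' : (4:ℝ) ≤ (n:ℝ) := by exact_mod_cast hn
  set B : ℝ := α * ((n:ℝ) - 1) with hB
  set C : ℝ := α * (2*(n:ℝ)-3) + 2*(1-α)*((n:ℝ)-2) with hC
  have harg : (0:ℝ) ≤ (C - B)^2 + 4*((n:ℝ)-1)*(1-α)^2 := by
    nlinarith [sq_nonneg (C - B), sq_nonneg (1 - α)]
  set s : ℝ := Real.sqrt ((C - B)^2 + 4*((n:ℝ)-1)*(1-α)^2) with hs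
  have hs2 : s^2 = (C - B)^2 + 4*((n:ℝ)-1)*(1-α)^2 := Real.sq_sqrt harg
  have hs0 : 0 ≤ s := Real.sqrt_nonneg _
  have hpos : 0 < 4*((n:ℝ)-1)*(1-α)^2 := by nlinarith
  have hmu : muS n α = ((B + C) + s) / 2 := rfl
  have habs : (C - B)^2 < s^2 := by nlinarith
  have h1 : B - C < s := by nlinarith
  have h2 : C - B < s := by nlinarith
  refine ⟨?_, by rw [hmu]; nlinarith, by rw [hmu]; nlinarith⟩
  rw [hmu]
  nlinarith [hs2]

lemma star_eigen (hn : 4 ≤ n) (hα0 : 0 ≤ α) (hα1 : α < 1) :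
    (Dalpha (starGraph n) α) *ᵥ
        (fun v : Fin n => if v = 0 then (1-α)*((n:ℝ)-1) else muS n α - α * ((n:ℝ) - 1))
      = muS n α • (fun v : Fin n => if v = 0 then (1-α)*((n:ℝ)-1) else muS n α - α * ((n:ℝ) - 1)) := by
  have hprod := (muS_facts hn hα0 hα1).1
  set x : Fin n → ℝ :=
    fun v => if v = 0 then (1-α)*((n:ℝ)-1) else muS n α - α * ((n:ℝ) - 1) with hx
  have hx0 : x 0 = (1-α)*((n:ℝ)-1) := by simp [hx]
  have hxub : ∀ u : Fin n, u ≠ 0 → x u = muS n α - α * ((n:ℝ) - 1) := fun u hu => by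
    simp [hx, hu]
  have hsum : ∑ v ∈ (univ : Finset (Fin n)).erase 0, x v
      = ((n:ℝ)-1) * (muS n α - α * ((n:ℝ) - 1)) := by
    rw [Finset.sum_congr rfl (fun v hv => hxub v (Finset.mem_erase.mp hv).1),
      Finset.sum_const, nsmul_eq_mul, card_erase_fin hn]
  funext u
  rw [Dalpha_mulVec]
  rw [show (muS n α • x) u = muS n α * x u from rfl]
  by_cases hu : u = 0
  · subst hu
    rw [star_transmission0 hn, star_rowsum0 hn x, hsum, hx0]
    ring
  · rw [star_transmission1 hn hu, star_rowsum1 hn x hu, hsum, hx0, hxub u hu]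
    linear_combination -hprod

set_option maxHeartbeats 1000000 in
lemma star_qbound (hn : 4 ≤ n) (hα0 : 0 ≤ α) (hα1 : α < 1) (y : Fin n → ℝ) :
    y ⬝ᵥ (Dalpha (starGraph n) α *ᵥ y) ≤ muS n α * (y ⬝ᵥ y) := by
  have hn' : (4:ℝ) ≤ (n:ℝ) := by exact_mod_cast hn
  obtain ⟨hprod, hp, hq⟩ := muS_facts hn hα0 hα1
  set m : ℝ := muS n α with hm
  set S : ℝ := ∑ v ∈ (univ : Finset (Fin n)).erase 0, y v with hS
  set T2 : ℝ := ∑ v ∈ (univ : Finset (Fin n)).erase 0, y v ^ 2 with hT2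
  have hyy : y ⬝ᵥ y = y 0 ^ 2 + T2 := by
    rw [dotProduct, sum_split (fun v => y v * y v) 0]
    have hcg0 : ∀ v ∈ (univ : Finset (Fin n)).erase 0, y v * y v = y v ^ 2 := fun v _ => (sq (y v)).symm
    rw [Finset.sum_congr rfl hcg0, ← hT2, sq]
  have hT : ∑ u, transmission (starGraph n) u * y u ^ 2
      = ((n:ℝ)-1) * y 0 ^ 2 + (2*(n:ℝ)-3) * T2 := by
    rw [sum_split (fun u => transmission (starGraph n) u * y u ^ 2) 0, star_transmission0 hn]
    have hcg : ∀ u ∈ (univ : Finset (Fin n)).erase 0,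
        transmission (starGraph n) u * y u ^ 2 = (2*(n:ℝ)-3) * y u ^ 2 := by
      intro u hu
      rw [star_transmission1 hn (Finset.mem_erase.mp hu).1]
    rw [Finset.sum_congr rfl hcg, ← Finset.mul_sum, ← hT2]
  have hD : ∑ u, ∑ v, ((starGraph n).dist u v : ℝ) * (y u * y v)
      = 2 * y 0 * S + 2 * S^2 - 2 * T2 := by
    have hrow : ∀ u, ∑ v, ((starGraph n).dist u v : ℝ) * (y u * y v)
        = y u * ∑ v, ((starGraph n).dist u v : ℝ) * y v := by
      intro u
      rw [Finset.mul_sum]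
      exact Finset.sum_congr rfl fun v _ => by ring
    rw [Finset.sum_congr rfl (fun u _ => hrow u),
      sum_split (fun u => y u * ∑ v, ((starGraph n).dist u v : ℝ) * y v) 0, star_rowsum0 hn y]
    have hcg2 : ∀ u ∈ (univ : Finset (Fin n)).erase 0,
        y u * ∑ v, ((starGraph n).dist u v : ℝ) * y v = y u * (y 0 + 2 * S - 2 * y u) := by
      intro u hu
      rw [star_rowsum1 hn y (Finset.mem_erase.mp hu).1]
    rw [Finset.sum_congr rfl hcg2]
    have hexp : ∑ u ∈ (univ : Finset (Fin n)).erase 0, y u * (y 0 + 2 * S - 2 * y u)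
        = y 0 * S + 2 * S^2 - 2 * T2 := by
      rw [Finset.sum_congr rfl (fun u (_ : u ∈ (univ : Finset (Fin n)).erase 0) =>
        (by ring : y u * (y 0 + 2 * S - 2 * y u)
          = y 0 * y u + 2 * S * y u - 2 * y u ^ 2))]
      rw [Finset.sum_sub_distrib, Finset.sum_add_distrib, ← Finset.mul_sum, ← Finset.mul_sum,
        ← Finset.mul_sum, ← hS, ← hT2]
      ring
    rw [hexp]
    ring
  have hCS : S^2 ≤ ((n:ℝ)-1) * T2 := by
    have := sq_sum_le_card_mul_sum_sq (s := (univ : Finset (Fin n)).erase 0) (f := y)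
    rw [← hS, ← hT2] at this
    rwa [card_erase_fin hn] at this
  rw [qform_eval, hT, hD, hyy]
  set p : ℝ := m - α * ((n:ℝ) - 1) with hpdef
  set q : ℝ := m - (α * (2*(n:ℝ)-3) + 2*(1-α)*((n:ℝ)-2)) with hqdef
  -- step 1 : (n-1) p y0² + q S² ≥ 2 (n-1)(1-α) y0 S
  have e2 : p * (((n:ℝ)-1) * p * (y 0)^2 + q * S^2 - 2*((n:ℝ)-1)*(1-α)*(y 0)*S)
      = ((n:ℝ)-1) * (p * (y 0) - (1-α)*S)^2 := by
    linear_combination (S^2) * hprod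
  have hsqn : 0 ≤ ((n:ℝ)-1) * (p * (y 0) - (1-α)*S)^2 := by
    nlinarith [sq_nonneg (p * (y 0) - (1-α)*S)]
  have step1 : 0 ≤ ((n:ℝ)-1) * p * (y 0)^2 + q * S^2 - 2*((n:ℝ)-1)*(1-α)*(y 0)*S := by
    nlinarith [e2, hp, hsqn]
  have hint1 : 0 ≤ (q + 2*(1-α)*((n:ℝ)-1)) * (((n:ℝ)-1) * T2 - S^2) := by
    apply mul_nonneg
    · nlinarith
    · nlinarith
  have hKey : ((n:ℝ)-1) * (m * (y 0 ^ 2 + T2)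
        - (α * (((n:ℝ)-1) * y 0 ^ 2 + (2*(n:ℝ)-3) * T2)
          + (1-α) * (2 * y 0 * S + 2 * S^2 - 2 * T2)))
      = (((n:ℝ)-1) * p * (y 0)^2 + q * S^2 - 2*((n:ℝ)-1)*(1-α)*(y 0)*S)
        + (q + 2*(1-α)*((n:ℝ)-1)) * (((n:ℝ)-1) * T2 - S^2) := by
    rw [hpdef, hqdef]
    ring
  have hpos : (0:ℝ) < (n:ℝ) - 1 := by linarith
  nlinarith [step1, hint1, hKey, hpos]

lemma muAlpha_star (hn : 4 ≤ n) (hα0 : 0 ≤ α) (hα1 : α < 1) :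
    muAlpha (starGraph n) α = muS n α := by
  obtain ⟨hprod, hp, hq⟩ := muS_facts hn hα0 hα1
  have hn' : (4:ℝ) ≤ (n:ℝ) := by exact_mod_cast hn
  have hx : (fun v : Fin n => if v = 0 then (1-α)*((n:ℝ)-1) else muS n α - α * ((n:ℝ) - 1)) ≠ 0 := by
    intro h
    have h2 : (if (0:Fin n) = 0 then (1-α)*((n:ℝ)-1) else muS n α - α * ((n:ℝ) - 1)) = 0 :=
      congrFun h 0
    rw [if_pos rfl] at h2
    nlinarith [h2]
  exact sSup_spectrum_eq_of_eigen hx (star_eigen hn hα0 hα1) (star_qbound hn hα0 hα1)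

end Star

/-! ### Combinatorial bounds for trees -/

section TreeBounds
set_option linter.unusedSectionVars false
variable {G : SimpleGraph V}

lemma A_bound (hc : G.Connected) (w : V) :
    ((univ.erase w).card : ℝ) ≤ ∑ v ∈ univ.erase w, (G.dist w v : ℝ) := by
  have h1 : ∀ v ∈ univ.erase w, (1:ℝ) ≤ (G.dist w v : ℝ) := by
    intro v hv
    have := hc.pos_dist_of_ne (Ne.symm (Finset.mem_erase.mp hv).1)
    exact_mod_cast this
  calc ((univ.erase w).card : ℝ) = ∑ _v ∈ univ.erase w, (1:ℝ) := by
        rw [Finset.sum_const, nsmul_eq_mul, mul_one]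
    _ ≤ _ := Finset.sum_le_sum h1

lemma A_bound_strict (hc : G.Connected) {w v0 : V} (hv0 : v0 ≠ w) (hd : 2 ≤ G.dist w v0) :
    ((univ.erase w).card : ℝ) + 1 ≤ ∑ v ∈ univ.erase w, (G.dist w v : ℝ) := by
  have hv0m : v0 ∈ univ.erase w := Finset.mem_erase.mpr ⟨hv0, mem_univ _⟩
  rw [← Finset.add_sum_erase _ _ hv0m]
  have h1 : ∀ v ∈ (univ.erase w).erase v0, (1:ℝ) ≤ (G.dist w v : ℝ) := by
    intro v hv
    have hvw : v ≠ w := (Finset.mem_erase.mp (Finset.mem_erase.mp hv).2).1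
    have := hc.pos_dist_of_ne (Ne.symm hvw)
    exact_mod_cast this
  have hcard1 : 1 ≤ (univ.erase w).card := Finset.card_pos.mpr ⟨v0, hv0m⟩
  have hcard : ((((univ.erase w).erase v0).card : ℝ)) = ((univ.erase w).card : ℝ) - 1 := by
    rw [Finset.card_erase_of_mem hv0m]
    push_cast [Nat.cast_sub hcard1]
    ring
  have h2 : ((univ.erase w).card : ℝ) - 1 ≤ ∑ v ∈ (univ.erase w).erase v0, (G.dist w v : ℝ) := by
    rw [← hcard]
    calc ((((univ.erase w).erase v0).card : ℝ)) = ∑ _v ∈ (univ.erase w).erase v0, (1:ℝ) := by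
          rw [Finset.sum_const, nsmul_eq_mul, mul_one]
      _ ≤ _ := Finset.sum_le_sum h1
  have h3 : (2:ℝ) ≤ (G.dist w v0 : ℝ) := by exact_mod_cast hd
  linarith

lemma B_bound (hT : G.IsTree) {w n1 n2 : V} (h1 : G.Adj w n1) (h2 : G.Adj w n2)
    (h12 : n1 ≠ n2) :
    2 * ((univ.erase w).card : ℝ) * (((univ.erase w).card : ℝ) - 1)
      ≤ ∑ u ∈ univ.erase w, ∑ v ∈ univ.erase w, (G.dist u v : ℝ) := by
  classical
  set E := (univ : Finset V).erase w with hE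
  have hsum_eq : ∑ u ∈ E, ∑ v ∈ E, (G.dist u v : ℝ) = ∑ p ∈ E.offDiag, (G.dist p.1 p.2 : ℝ) := by
    rw [← Finset.sum_product', ← Finset.diag_union_offDiag E,
      Finset.sum_union (Finset.disjoint_diag_offDiag E)]
    have hz : ∑ p ∈ E.diag, (G.dist p.1 p.2 : ℝ) = 0 := Finset.sum_eq_zero (fun p hp => by
      rw [(Finset.mem_diag.mp hp).2, SimpleGraph.dist_self, Nat.cast_zero])
    rw [hz, zero_add]
  set far : V → V := fun z => if 3 ≤ G.dist z n1 then n1 else n2 with hfar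
  set φ : V × V → V × V := fun p =>
    if G.dist w p.1 < G.dist w p.2 then (p.2, far p.2) else (far p.1, p.1) with hφ
  set Edge : Finset (V × V) := E.offDiag.filter (fun p => G.Adj p.1 p.2) with hEdge
  set Far : Finset (V × V) := Edge.image φ with hFar
  have hn1w : n1 ≠ w := h1.ne'
  have hn2w : n2 ≠ w := h2.ne'
  have hedge_mem : ∀ p ∈ Edge, p.1 ≠ w ∧ p.2 ≠ w ∧ G.Adj p.1 p.2 := by
    intro p hp
    obtain ⟨hpo, hadj⟩ := Finset.mem_filter.mp hp
    obtain ⟨hp1, hp2, _⟩ := Finset.mem_offDiag.mp hpo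
    exact ⟨(Finset.mem_erase.mp hp1).1, (Finset.mem_erase.mp hp2).1, hadj⟩
  have hfar_dist : ∀ z, 2 ≤ G.dist w z → 3 ≤ G.dist z (far z) := by
    intro z hz
    by_cases h : 3 ≤ G.dist z n1
    · simpa [hfar, h] using h
    · rcases far_neighbor hT hz h1 h2 h12 with h' | h'
      · omega
      · simpa [hfar, h] using h'
  have hfarw : ∀ z, far z ≠ w := by
    intro z
    by_cases h : 3 ≤ G.dist z n1 <;> simp [hfar, h, hn1w, hn2w]
  have hfard : ∀ z, G.dist w (far z) = 1 := by
    intro z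
    by_cases h : 3 ≤ G.dist z n1 <;>
      simp [hfar, h, SimpleGraph.dist_eq_one_iff_adj.mpr h1, SimpleGraph.dist_eq_one_iff_adj.mpr h2]
  have hdeep : ∀ p ∈ Edge,
      (G.dist w p.1 < G.dist w p.2 ∧ G.dist w p.2 = G.dist w p.1 + 1 ∧ 2 ≤ G.dist w p.2)
      ∨ (¬(G.dist w p.1 < G.dist w p.2) ∧ G.dist w p.1 = G.dist w p.2 + 1 ∧ 2 ≤ G.dist w p.1) := by
    intro p hp
    obtain ⟨hp1, hp2, hadj⟩ := hedge_mem p hp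
    have hpos1 : 0 < G.dist w p.1 := hT.isConnected.pos_dist_of_ne (Ne.symm hp1)
    have hpos2 : 0 < G.dist w p.2 := hT.isConnected.pos_dist_of_ne (Ne.symm hp2)
    rcases adj_dichotomy hT w hadj with h | h
    · left; exact ⟨by omega, h, by omega⟩
    · right; exact ⟨by omega, h, by omega⟩
  have hφ_mem : ∀ p ∈ Edge, φ p ∈ E.offDiag ∧ 3 ≤ G.dist (φ p).1 (φ p).2 := by
    intro p hp
    obtain ⟨hp1, hp2, hadj⟩ := hedge_mem p hp
    rcases hdeep p hp with ⟨hlt, heq, hge⟩ | ⟨hlt, heq, hge⟩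
    · have hfp : φ p = (p.2, far p.2) := by simp [hφ, if_pos hlt]
      have h3 : 3 ≤ G.dist p.2 (far p.2) := hfar_dist p.2 hge
      refine ⟨?_, by rw [hfp]; exact h3⟩
      rw [hfp, Finset.mem_offDiag]
      refine ⟨Finset.mem_erase.mpr ⟨hp2, mem_univ _⟩,
        Finset.mem_erase.mpr ⟨hfarw p.2, mem_univ _⟩, ?_⟩
      intro hcon
      have hcon' : p.2 = far p.2 := hcon
      rw [← hcon', SimpleGraph.dist_self] at h3
      omega
    · have hfp : φ p = (far p.1, p.1) := by simp [hφ, if_neg hlt]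
      have h3 : 3 ≤ G.dist p.1 (far p.1) := hfar_dist p.1 hge
      have h3' : 3 ≤ G.dist (far p.1) p.1 := by rwa [SimpleGraph.dist_comm]
      refine ⟨?_, by rw [hfp]; exact h3'⟩
      rw [hfp, Finset.mem_offDiag]
      refine ⟨Finset.mem_erase.mpr ⟨hfarw p.1, mem_univ _⟩,
        Finset.mem_erase.mpr ⟨hp1, mem_univ _⟩, ?_⟩
      intro hcon
      have hcon' : far p.1 = p.1 := hcon
      rw [hcon', SimpleGraph.dist_self] at h3'
      omega
  have hφ_inj : Set.InjOn φ Edge := by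
    intro p hp q hq hpq
    obtain ⟨hp1, hp2, hadjp⟩ := hedge_mem p hp
    obtain ⟨hq1, hq2, hadjq⟩ := hedge_mem q hq
    rcases hdeep p hp with ⟨hltp, heqp, hgep⟩ | ⟨hltp, heqp, hgep⟩ <;>
      rcases hdeep q hq with ⟨hltq, heqq, hgeq⟩ | ⟨hltq, heqq, hgeq⟩
    · have hfp : φ p = (p.2, far p.2) := by simp [hφ, if_pos hltp]
      have hfq : φ q = (q.2, far q.2) := by simp [hφ, if_pos hltq]
      rw [hfp, hfq] at hpq
      have h22 : p.2 = q.2 := congrArg Prod.fst hpq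
      have hadjq' : G.Adj q.1 p.2 := by rw [h22]; exact hadjq
      have heqq' : G.dist w p.2 = G.dist w q.1 + 1 := by rw [h22]; exact heqq
      have := parent_unique hT hadjp hadjq' heqp heqq'
      exact Prod.ext_iff.mpr ⟨this, h22⟩
    · have hfp : φ p = (p.2, far p.2) := by simp [hφ, if_pos hltp]
      have hfq : φ q = (far q.1, q.1) := by simp [hφ, if_neg hltq]
      rw [hfp, hfq] at hpq
      have h2f : p.2 = far q.1 := congrArg Prod.fst hpq
      have : G.dist w p.2 = 1 := by rw [h2f]; exact hfard q.1
      omega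
    · have hfp : φ p = (far p.1, p.1) := by simp [hφ, if_neg hltp]
      have hfq : φ q = (q.2, far q.2) := by simp [hφ, if_pos hltq]
      rw [hfp, hfq] at hpq
      have hf2 : far p.1 = q.2 := congrArg Prod.fst hpq
      have : G.dist w q.2 = 1 := by rw [← hf2]; exact hfard p.1
      omega
    · have hfp : φ p = (far p.1, p.1) := by simp [hφ, if_neg hltp]
      have hfq : φ q = (far q.1, q.1) := by simp [hφ, if_neg hltq]
      rw [hfp, hfq] at hpq
      have h11 : p.1 = q.1 := congrArg Prod.snd hpq
      have hadjp' : G.Adj p.2 p.1 := hadjp.symm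
      have hadjq' : G.Adj q.2 p.1 := by rw [h11]; exact hadjq.symm
      have heqq' : G.dist w p.1 = G.dist w q.2 + 1 := by rw [h11]; exact heqq
      have := parent_unique hT hadjp' hadjq' heqp heqq'
      exact Prod.ext_iff.mpr ⟨h11, this⟩
  have hdisj : Disjoint Edge Far := by
    rw [Finset.disjoint_left]
    intro p hpE hpF
    obtain ⟨q, hq, hqe⟩ := Finset.mem_image.mp hpF
    have h3 := (hφ_mem q hq).2
    rw [hqe] at h3
    have hadj := (hedge_mem p hpE).2.2
    have hd1 : G.dist p.1 p.2 = 1 := SimpleGraph.dist_eq_one_iff_adj.mpr hadj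
    omega
  have hcardF : Far.card = Edge.card := Finset.card_image_of_injOn hφ_inj
  have hsub : Edge ∪ Far ⊆ E.offDiag := by
    intro p hp
    rcases Finset.mem_union.mp hp with h | h
    · exact Finset.filter_subset _ _ h
    · obtain ⟨q, hq, hqe⟩ := Finset.mem_image.mp h
      exact hqe ▸ (hφ_mem q hq).1
  have hrest : ∀ p ∈ E.offDiag \ (Edge ∪ Far), (0:ℝ) ≤ (G.dist p.1 p.2 : ℝ) - 2 := by
    intro p hp
    obtain ⟨hpo, hpn⟩ := Finset.mem_sdiff.mp hp
    rw [Finset.mem_union, not_or] at hpn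
    have hne : p.1 ≠ p.2 := (Finset.mem_offDiag.mp hpo).2.2
    have hnadj : ¬ G.Adj p.1 p.2 := fun hadj => hpn.1 (Finset.mem_filter.mpr ⟨hpo, hadj⟩)
    have hpos : 0 < G.dist p.1 p.2 := hT.isConnected.pos_dist_of_ne hne
    have hne1 : G.dist p.1 p.2 ≠ 1 := fun h => hnadj (SimpleGraph.dist_eq_one_iff_adj.mp h)
    have h2' : 2 ≤ G.dist p.1 p.2 := by omega
    have : (2:ℝ) ≤ (G.dist p.1 p.2 : ℝ) := by exact_mod_cast h2'
    linarith
  have hEdgesum : ∑ p ∈ Edge, ((G.dist p.1 p.2 : ℝ) - 2) = -(Edge.card : ℝ) := by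
    have : ∀ p ∈ Edge, ((G.dist p.1 p.2 : ℝ) - 2) = -1 := by
      intro p hp
      have hd1 : G.dist p.1 p.2 = 1 := SimpleGraph.dist_eq_one_iff_adj.mpr (hedge_mem p hp).2.2
      rw [hd1]
      norm_num
    rw [Finset.sum_congr rfl this, Finset.sum_const, nsmul_eq_mul]
    ring
  have hFarsum : (Far.card : ℝ) ≤ ∑ p ∈ Far, ((G.dist p.1 p.2 : ℝ) - 2) := by
    have hterm : ∀ p ∈ Far, (1:ℝ) ≤ (G.dist p.1 p.2 : ℝ) - 2 := by
      intro p hp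
      obtain ⟨q, hq, hqe⟩ := Finset.mem_image.mp hp
      have h3 := (hφ_mem q hq).2
      rw [hqe] at h3
      have : (3:ℝ) ≤ (G.dist p.1 p.2 : ℝ) := by exact_mod_cast h3
      linarith
    calc (Far.card : ℝ) = ∑ _p ∈ Far, (1:ℝ) := by rw [Finset.sum_const, nsmul_eq_mul, mul_one]
      _ ≤ _ := Finset.sum_le_sum hterm
  have hmain : (0:ℝ) ≤ ∑ p ∈ E.offDiag, ((G.dist p.1 p.2 : ℝ) - 2) := by
    have hsdiff : (0:ℝ) ≤ ∑ p ∈ E.offDiag \ (Edge ∪ Far), ((G.dist p.1 p.2 : ℝ) - 2) :=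
      Finset.sum_nonneg hrest
    have hsplit := Finset.sum_sdiff (f := fun p : V × V => ((G.dist p.1 p.2 : ℝ) - 2)) hsub
    rw [Finset.sum_union hdisj] at hsplit
    rw [← hsplit]
    rw [hcardF] at hFarsum
    linarith [hEdgesum, hFarsum, hsdiff]
  have hcardoff : (E.offDiag.card : ℝ) = (E.card : ℝ) * ((E.card : ℝ) - 1) := by
    rw [Finset.offDiag_card]
    have hle : E.card ≤ E.card * E.card := by nlinarith [Nat.zero_le E.card]
    push_cast [Nat.cast_sub hle]
    ring
  have hfinal : ∑ p ∈ E.offDiag, (G.dist p.1 p.2 : ℝ)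
      = ∑ p ∈ E.offDiag, ((G.dist p.1 p.2 : ℝ) - 2) + 2 * (E.offDiag.card : ℝ) := by
    rw [Finset.sum_sub_distrib, Finset.sum_const, nsmul_eq_mul]
    ring
  rw [hsum_eq, hfinal, hcardoff]
  linarith [hmain]

end TreeBounds

/-! ### Isomorphism invariance and helper constructions -/

section IsoHelpers
set_option linter.unusedSectionVars false
variable {G : SimpleGraph V}

lemma iso_dist_eq {U : Type*} [Fintype U] [DecidableEq U] {H : SimpleGraph U}
    (hc : G.Connected) (e : G ≃g H) (u v : V) : H.dist (e u) (e v) = G.dist u v := by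
  have h1 : H.dist (e u) (e v) ≤ G.dist u v := by
    obtain ⟨p, hp⟩ := (hc.preconnected u v).exists_walk_length_eq_dist
    calc H.dist (e u) (e v) ≤ (p.map e.toHom).length := SimpleGraph.dist_le _
      _ = p.length := by simp
      _ = G.dist u v := hp
  have h2 : G.dist u v ≤ H.dist (e u) (e v) := by
    have hr : H.Reachable (e u) (e v) := ⟨((hc.preconnected u v).some).map e.toHom⟩
    obtain ⟨q, hq⟩ := hr.exists_walk_length_eq_dist
    calc G.dist u v ≤ ((q.map e.symm.toHom).copy (by simp) (by simp)).length :=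
          SimpleGraph.dist_le _
      _ = q.length := by simp
      _ = H.dist (e u) (e v) := hq
  omega

lemma muAlpha_iso {U : Type*} [Fintype U] [DecidableEq U] {H : SimpleGraph U}
    (hc : G.Connected) (e : G ≃g H) (α : ℝ) : muAlpha G α = muAlpha H α := by
  have hdist := iso_dist_eq hc e
  have hsymm : ∀ x : U, e (e.toEquiv.symm x) = x := fun x => e.toEquiv.apply_symm_apply x
  have hmat : Dalpha H α = (Matrix.reindexAlgEquiv ℝ ℝ e.toEquiv) (Dalpha G α) := by
    ext i j
    rw [Matrix.reindexAlgEquiv_apply]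
    simp only [Matrix.reindex_apply, Matrix.submatrix_apply]
    have hdd : (H.dist i j : ℝ) = (G.dist (e.toEquiv.symm i) (e.toEquiv.symm j) : ℝ) := by
      rw [← hdist (e.toEquiv.symm i) (e.toEquiv.symm j), hsymm, hsymm]
    have htt : transmission H i = transmission G (e.toEquiv.symm i) := by
      rw [transmission, transmission,
        ← Equiv.sum_comp e.toEquiv (fun v => (H.dist i v : ℝ))]
      refine Finset.sum_congr rfl fun v _ => ?_
      have hstep : H.dist i (e v) = G.dist (e.toEquiv.symm i) v := by
        rw [← hdist (e.toEquiv.symm i) v, hsymm]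
      exact_mod_cast hstep
    simp only [Dalpha, Matrix.add_apply, Matrix.smul_apply, distMatrix,
      Matrix.diagonal_apply, smul_eq_mul]
    rw [htt, hdd]
    by_cases h : i = j
    · rw [if_pos h, if_pos (by rw [h])]
    · rw [if_neg h, if_neg (fun hcon => h (by
        have := congrArg e.toEquiv hcon
        simpa using this))]
  rw [muAlpha, muAlpha, hmat, AlgEquiv.spectrum_eq]

lemma exists_two_neighbors (hT : G.IsTree) (h3 : 3 ≤ Fintype.card V) :
    ∃ w a b : V, G.Adj w a ∧ G.Adj w b ∧ a ≠ b := by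
  classical
  by_contra hcon
  push_neg at hcon
  have hdeg : ∀ w : V, G.degree w ≤ 1 := by
    intro w
    by_contra hd
    push_neg at hd
    obtain ⟨a, ha, b, hb, hab⟩ := Finset.one_lt_card.mp hd
    rw [SimpleGraph.mem_neighborFinset] at ha hb
    exact hab (hcon w a b ha hb)
  have hsum := SimpleGraph.sum_degrees_eq_twice_card_edges G
  have hcnt := hT.card_edgeFinset
  have hle : ∑ v : V, G.degree v ≤ Fintype.card V := by
    calc ∑ v : V, G.degree v ≤ ∑ _v : V, 1 := Finset.sum_le_sum fun v _ => hdeg v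
      _ = Fintype.card V := by rw [Finset.sum_const, smul_eq_mul, mul_one, card_univ]
  omega

lemma iso_of_center (hT : G.IsTree) {n : ℕ} (hn : 4 ≤ n) (hcard : Fintype.card V = n)
    {w : V} (hall : ∀ v, v ≠ w → G.dist w v = 1) : Nonempty (G ≃g starGraph n) := by
  haveI : NeZero n := ⟨by omega⟩
  set e : V ≃ Fin n := (Fintype.equivFinOfCardEq hcard).trans
    (Equiv.swap ((Fintype.equivFinOfCardEq hcard) w) 0) with he
  have hew : e w = 0 := by rw [he]; simp [Equiv.swap_apply_left]
  have hadj : ∀ u v : V, G.Adj u v ↔ u ≠ v ∧ (u = w ∨ v = w) := by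
    intro u v
    constructor
    · intro h
      refine ⟨h.ne, ?_⟩
      by_contra hcont
      push_neg at hcont
      obtain ⟨hu, hv⟩ := hcont
      have hadj_wu : G.Adj w u := SimpleGraph.dist_eq_one_iff_adj.mp (hall u hu)
      have hadj_wv : G.Adj w v := SimpleGraph.dist_eq_one_iff_adj.mp (hall v hv)
      have hp1 : ((SimpleGraph.Walk.cons hadj_wv SimpleGraph.Walk.nil) : G.Walk w v).IsPath := by
        simp [SimpleGraph.Walk.cons_isPath_iff, hadj_wv.ne]
      have hp2 : ((SimpleGraph.Walk.cons hadj_wu (SimpleGraph.Walk.cons h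
          SimpleGraph.Walk.nil)) : G.Walk w v).IsPath := by
        simp [SimpleGraph.Walk.cons_isPath_iff]
        exact ⟨h.ne, hadj_wu.ne, Ne.symm hv⟩
      have heq := (hT.existsUnique_path w v).unique hp1 hp2
      have hlen := congrArg SimpleGraph.Walk.length heq
      simp [SimpleGraph.Walk.length_cons] at hlen
    · rintro ⟨hne, h | h⟩
      · subst h
        exact SimpleGraph.dist_eq_one_iff_adj.mp (hall v (Ne.symm hne))
      · subst h
        exact (SimpleGraph.dist_eq_one_iff_adj.mp (hall u hne)).symm
  refine ⟨⟨e, ?_⟩⟩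
  intro u v
  rw [star_adj hn, hadj u v]
  have h0 : ∀ z : V, e z = 0 ↔ z = w := fun z =>
    ⟨fun h => e.injective (by rw [h, hew]), fun h => by rw [h, hew]⟩
  rw [h0 u, h0 v, Ne, Equiv.apply_eq_iff_eq]

end IsoHelpers

set_option maxHeartbeats 4000000 in
/-- the star uniquely minimizes the distance α-spectral radius among trees
on `n ≥ 4` vertices. -/
theorem tree_muAlpha_ge_star (n : ℕ) (hn : 4 ≤ n) (G : SimpleGraph V)
    (hcard : Fintype.card V = n) (hT : G.IsTree)
    (α : ℝ) (hα0 : 0 ≤ α) (hα1 : α < 1) :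
    muAlpha G α ≥ muAlpha (starGraph n) α ∧
      (muAlpha G α = muAlpha (starGraph n) α ↔ Nonempty (G ≃g starGraph n)) := by
  classical
  haveI : NeZero n := ⟨by omega⟩
  haveI hNV : Nonempty V := by
    rw [← Fintype.card_pos_iff, hcard]; omega
  have hn' : (4:ℝ) ≤ (n:ℝ) := by exact_mod_cast hn
  obtain ⟨hprod, hp, hq⟩ := muS_facts hn hα0 hα1
  have hstar : muAlpha (starGraph n) α = muS n α := muAlpha_star hn hα0 hα1
  have hxs := star_eigen hn hα0 hα1
  obtain ⟨w, n1, n2, hwn1, hwn2, h12⟩ := exists_two_neighbors hT (by rw [hcard]; omega)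
  -- opaque abbreviations
  obtain ⟨m, hm⟩ : ∃ m : ℝ, m = muS n α := ⟨_, rfl⟩
  rw [← hm] at hprod hp hq hstar hxs
  obtain ⟨a, ha⟩ : ∃ a : ℝ, a = (1-α)*((n:ℝ)-1) := ⟨_, rfl⟩
  obtain ⟨b, hb⟩ : ∃ b : ℝ, b = m - α * ((n:ℝ) - 1) := ⟨_, rfl⟩
  rw [← ha, ← hb] at hxs
  rw [← hb] at hprod hp
  have ha0 : 0 < a := by rw [ha]; nlinarith
  have hb0 : 0 < b := hp
  obtain ⟨w1, hw1⟩ : ∃ w1 : ℝ, w1 = α * (a^2 + b^2) + 2*(1-α)*a*b := ⟨_, rfl⟩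
  have hw1pos : 0 < w1 := by
    rw [hw1]
    nlinarith [mul_pos ha0 hb0, sq_nonneg a, sq_nonneg b]
  -- the test vector on V
  set x : V → ℝ := fun v => if v = w then a else b with hx
  have hxne : x ≠ 0 := by
    intro h
    have h2 : a = 0 := by
      have := congrFun h w
      simpa [hx] using this
    nlinarith
  have hxx : x ⬝ᵥ x = a^2 + ((n:ℝ)-1)*b^2 := by
    rw [hx]
    have := dot_self_split (V := V) w a b
    rw [hcard] at this
    exact this
  have hxxpos : 0 < x ⬝ᵥ x := dotProduct_self_pos hxne
  have hcardE : ((univ.erase w).card : ℝ) = (n:ℝ) - 1 := by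
    rw [Finset.card_erase_of_mem (mem_univ _), card_univ, hcard]
    push_cast [Nat.cast_sub (by omega : 1 ≤ n)]
    ring
  -- star quadratic form value
  have hstareq : m * (a^2 + ((n:ℝ)-1)*b^2)
      = w1 * ((n:ℝ)-1) + b^2 * (2*((n:ℝ)-1)*((n:ℝ)-2)) := by
    set xs : Fin n → ℝ := fun v => if v = 0 then a else b with hxsdef
    have hL : xs ⬝ᵥ (Dalpha (starGraph n) α *ᵥ xs) = m * (a^2 + ((n:ℝ)-1)*b^2) := by
      rw [hxs, dotProduct_smul, smul_eq_mul]
      have hdots : xs ⬝ᵥ xs = a^2 + ((n:ℝ)-1)*b^2 := by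
        rw [hxsdef]
        have := dot_self_split (V := Fin n) 0 a b
        rw [Fintype.card_fin] at this
        exact this
      rw [hdots]
    have hA : ∑ v ∈ (univ : Finset (Fin n)).erase 0, ((starGraph n).dist 0 v : ℝ)
        = (n:ℝ)-1 := by
      have hcg : ∀ v ∈ (univ : Finset (Fin n)).erase 0,
          ((starGraph n).dist 0 v : ℝ) = 1 := by
        intro v hv
        rw [star_dist hn, if_neg (Ne.symm (Finset.mem_erase.mp hv).1), if_pos (Or.inl rfl),
          Nat.cast_one]
      rw [Finset.sum_congr rfl hcg, Finset.sum_const, nsmul_eq_mul, mul_one, card_erase_fin hn]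
    have hB2 : ∑ u ∈ (univ : Finset (Fin n)).erase 0, ∑ v ∈ (univ : Finset (Fin n)).erase 0,
        ((starGraph n).dist u v : ℝ) = 2*((n:ℝ)-1)*((n:ℝ)-2) := by
      have hinner : ∀ u ∈ (univ : Finset (Fin n)).erase 0,
          ∑ v ∈ (univ : Finset (Fin n)).erase 0, ((starGraph n).dist u v : ℝ)
            = 2*((n:ℝ)-2) := by
        intro u hu
        have hu0 : u ≠ 0 := (Finset.mem_erase.mp hu).1
        rw [← Finset.add_sum_erase _ _ hu, SimpleGraph.dist_self, Nat.cast_zero, zero_add]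
        have hcg : ∀ v ∈ ((univ : Finset (Fin n)).erase 0).erase u,
            ((starGraph n).dist u v : ℝ) = 2 := by
          intro v hv
          have hvu : v ≠ u := (Finset.mem_erase.mp hv).1
          have hv0 : v ≠ 0 := (Finset.mem_erase.mp (Finset.mem_erase.mp hv).2).1
          rw [star_dist hn, if_neg (Ne.symm hvu), if_neg (by push_neg; exact ⟨hu0, hv0⟩)]
          norm_num
        rw [Finset.sum_congr rfl hcg, Finset.sum_const, nsmul_eq_mul]
        have hcc : ((((univ : Finset (Fin n)).erase 0).erase u).card : ℝ) = (n:ℝ) - 2 := by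
          rw [Finset.card_erase_of_mem hu, Finset.card_erase_of_mem (mem_univ _), card_univ,
            Fintype.card_fin]
          push_cast [Nat.cast_sub (by omega : 1 ≤ n), Nat.cast_sub (by omega : 1 ≤ n - 1)]
          ring
        rw [hcc]
        ring
      rw [Finset.sum_congr rfl hinner, Finset.sum_const, nsmul_eq_mul, card_erase_fin hn]
      ring
    have hR : xs ⬝ᵥ (Dalpha (starGraph n) α *ᵥ xs)
        = w1 * ((n:ℝ)-1) + b^2 * (2*((n:ℝ)-1)*((n:ℝ)-2)) := by
      rw [hxsdef, qform_split (starGraph n) α 0 a b, hA, hB2, hw1]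
    rw [← hL, hR]
  -- tree side
  have hAb := A_bound hT.isConnected w
  have hBb := B_bound hT hwn1 hwn2 h12
  rw [hcardE] at hAb hBb
  have hBb2 : 2*((n:ℝ)-1)*((n:ℝ)-2)
      ≤ ∑ u ∈ univ.erase w, ∑ v ∈ univ.erase w, (G.dist u v : ℝ) := by
    have heq2 : 2*((n:ℝ)-1)*((n:ℝ)-1-1) = 2*((n:ℝ)-1)*((n:ℝ)-2) := by ring
    rw [heq2] at hBb
    exact hBb
  have hqsplit := qform_split G α w a b
  have hmuG : x ⬝ᵥ (Dalpha G α *ᵥ x) ≤ muAlpha G α * (x ⬝ᵥ x) := by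
    rw [muAlpha]
    exact qform_le_sSup (Dalpha_isHermitian G α) x
  rw [hxx] at hmuG
  have hqT : w1 * ((n:ℝ)-1) + b^2*(2*((n:ℝ)-1)*((n:ℝ)-2))
      + w1 * ((∑ v ∈ univ.erase w, (G.dist w v : ℝ)) - ((n:ℝ)-1))
      ≤ x ⬝ᵥ (Dalpha G α *ᵥ x) := by
    rw [hx, hqsplit]
    have hb2 : b^2*(2*((n:ℝ)-1)*((n:ℝ)-2))
        ≤ b^2 * (∑ u ∈ univ.erase w, ∑ v ∈ univ.erase w, (G.dist u v : ℝ)) :=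
      mul_le_mul_of_nonneg_left hBb2 (sq_nonneg b)
    rw [hw1]
    nlinarith [hb2]
  by_cases hdeep : ∃ v, v ≠ w ∧ 2 ≤ G.dist w v
  · obtain ⟨v0, hv0w, hv0d⟩ := hdeep
    have hAs := A_bound_strict hT.isConnected hv0w hv0d
    rw [hcardE] at hAs
    have hterm : w1 * 1 ≤ w1 * ((∑ v ∈ univ.erase w, (G.dist w v : ℝ)) - ((n:ℝ)-1)) :=
      mul_le_mul_of_nonneg_left (by linarith [hAs]) hw1pos.le
    have hchain : m * (a^2 + ((n:ℝ)-1)*b^2) + w1 ≤ muAlpha G α * (a^2 + ((n:ℝ)-1)*b^2) := by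
      rw [hstareq]
      linarith [hqT, hmuG, hterm]
    have hgt : muAlpha (starGraph n) α < muAlpha G α := by
      rw [hstar]
      have hpos2 : 0 < a^2 + ((n:ℝ)-1)*b^2 := by rw [← hxx]; exact hxxpos
      nlinarith [hchain, hpos2, hw1pos]
    refine ⟨le_of_lt hgt, ⟨fun heq => absurd heq hgt.ne', ?_⟩⟩
    rintro ⟨iso⟩
    exfalso
    have := muAlpha_iso hT.isConnected iso α
    linarith
  · push_neg at hdeep
    have hall : ∀ v, v ≠ w → G.dist w v = 1 := by
      intro v hv
      have hlt := hdeep v hv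
      have hpos := hT.isConnected.pos_dist_of_ne (Ne.symm hv)
      omega
    obtain ⟨iso⟩ := iso_of_center hT hn hcard hall
    have heq := muAlpha_iso hT.isConnected iso α
    exact ⟨le_of_eq heq.symm, ⟨fun _ => ⟨iso⟩, fun _ => heq⟩⟩

end DistAlpha
end
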